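/- arXiv:1911.08032 — 4 statements merged into one kernel-verified Lean document; each statement's English description precedes it below -/
import Mathlib

section
/- Let G be a totally disconnected locally compact group. The function d(U,V) = log([U : U ∩ V] · [V : U ∩ V]) defines a metric on the set COS(G) of compact open subgroups of G, and every topological group automorphism of G acts by isometries on (COS(G), d). -/
/-!
An open subgroup of a compact group has finite index, so any two compact open subgroups are
commensurable. For commensurable subgroups the triangle inequality reduces to
`[U : U ∩ X] ≤ [U : U ∩ W] [W : W ∩ X]`, and injective homomorphisms preserve relative indices.
-/

/-- The distance `d(U,V) = log([U : U ∩ V] · [V : U ∩ V])` between two subgroups. -/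
noncomputable def cosDist {G : Type*} [Group G] (U W : Subgroup G) : ℝ :=
  Real.log ((W.relIndex U * U.relIndex W : ℕ) : ℝ)

namespace Subgroup

variable {G : Type*} [Group G]

theorem relIndex_ne_zero_of_isCompact_of_isOpen [TopologicalSpace G] [IsTopologicalGroup G]
    {H K : Subgroup G} (hH : IsCompact (H : Set G)) (hK : IsOpen (K : Set G)) :
    K.relIndex H ≠ 0 := by
  have : CompactSpace H := isCompact_iff_compactSpace.mp hH
  have : Finite (H ⧸ K.subgroupOf H) :=
    (K.subgroupOf H).quotient_finite_of_isOpen (hK.preimage continuous_subtype_val)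
  exact index_ne_zero_of_finite

theorem commensurable_of_isCompact_of_isOpen [TopologicalSpace G] [IsTopologicalGroup G]
    {H K : Subgroup G} (hHc : IsCompact (H : Set G)) (hHo : IsOpen (H : Set G))
    (hKc : IsCompact (K : Set G)) (hKo : IsOpen (K : Set G)) : H.Commensurable K :=
  ⟨relIndex_ne_zero_of_isCompact_of_isOpen hKc hHo,
    relIndex_ne_zero_of_isCompact_of_isOpen hHc hKo⟩

/-- `[U : U ∩ X] ≤ [U : U ∩ W] [W : W ∩ X]`, passing through `U ∩ W ∩ X`. -/
theorem relIndex_le_relIndex_mul_relIndex {U W X : Subgroup G} (hWU : W.relIndex U ≠ 0)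
    (hXW : X.relIndex W ≠ 0) : X.relIndex U ≤ W.relIndex U * X.relIndex W := by
  have hXWU : X.relIndex (W ⊓ U) ≠ 0 := mt (relIndex_eq_zero_of_le_right inf_le_left) hXW
  have hfin : (X ⊓ W).relIndex U ≠ 0 := by
    rw [← relIndex_inf_mul_relIndex]
    exact mul_ne_zero hXWU hWU
  calc X.relIndex U ≤ (X ⊓ W).relIndex U := relIndex_le_of_le_left inf_le_left hfin
    _ = X.relIndex (W ⊓ U) * W.relIndex U := (relIndex_inf_mul_relIndex X W U).symm
    _ ≤ W.relIndex U * X.relIndex W := by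
      rw [mul_comm]; gcongr; exact relIndex_le_of_le_right inf_le_left hXW

end Subgroup

section cosDist

open Subgroup

variable {G : Type*} [Group G]

theorem cosDist_comm (U W : Subgroup G) : cosDist U W = cosDist W U := by
  rw [cosDist, cosDist, mul_comm]

theorem cosDist_nonneg (U W : Subgroup G) : 0 ≤ cosDist U W :=
  Real.log_natCast_nonneg _

theorem cosDist_eq_zero_iff {U W : Subgroup G} (h : U.Commensurable W) :
    cosDist U W = 0 ↔ U = W := by
  have hne : W.relIndex U * U.relIndex W ≠ 0 := mul_ne_zero h.2 h.1
  rw [cosDist, Real.log_eq_zero]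
  norm_cast
  simp only [hne, mul_eq_one, relIndex_eq_one, false_or, or_false]
  exact le_antisymm_iff.symm

theorem cosDist_triangle {U W X : Subgroup G} (hUW : U.Commensurable W)
    (hWX : W.Commensurable X) : cosDist U X ≤ cosDist U W + cosDist W X := by
  have hUX := hUW.trans hWX
  have hprod : X.relIndex U * U.relIndex X ≤
      (W.relIndex U * U.relIndex W) * (X.relIndex W * W.relIndex X) :=
    calc X.relIndex U * U.relIndex X
        ≤ (W.relIndex U * X.relIndex W) * (W.relIndex X * U.relIndex W) :=
          Nat.mul_le_mul (relIndex_le_relIndex_mul_relIndex hUW.2 hWX.2)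
            (relIndex_le_relIndex_mul_relIndex hWX.1 hUW.1)
      _ = (W.relIndex U * U.relIndex W) * (X.relIndex W * W.relIndex X) := by ring
  have hpos : (0 : ℝ) < (X.relIndex U * U.relIndex X : ℕ) := by
    exact_mod_cast Nat.pos_of_ne_zero (mul_ne_zero hUX.2 hUX.1)
  rw [cosDist, cosDist, cosDist, ← Real.log_mul (by exact_mod_cast mul_ne_zero hUW.2 hUW.1)
    (by exact_mod_cast mul_ne_zero hWX.2 hWX.1)]
  exact Real.log_le_log hpos (by exact_mod_cast hprod)

theorem cosDist_map_of_injective {H : Type*} [Group H] {f : G →* H}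
    (hf : Function.Injective f) (U W : Subgroup G) :
    cosDist (U.map f) (W.map f) = cosDist U W := by
  rw [cosDist, cosDist, relIndex_map_map_of_injective _ _ hf,
    relIndex_map_map_of_injective _ _ hf]

end cosDist

theorem cosDist_is_metric_and_aut_isometric_general {G : Type*} [Group G] [TopologicalSpace G]
    [IsTopologicalGroup G] :
    (∀ U W : Subgroup G, IsCompact (U : Set G) → IsOpen (U : Set G) →
      IsCompact (W : Set G) → IsOpen (W : Set G) →
        (0 ≤ cosDist U W ∧ cosDist U W = cosDist W U ∧ (cosDist U W = 0 ↔ U = W))) ∧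
    (∀ U W X : Subgroup G, IsCompact (U : Set G) → IsOpen (U : Set G) →
      IsCompact (W : Set G) → IsOpen (W : Set G) →
      IsCompact (X : Set G) → IsOpen (X : Set G) →
        cosDist U X ≤ cosDist U W + cosDist W X) ∧
    (∀ α : G ≃* G, Continuous ⇑α → Continuous ⇑α.symm →
      ∀ U W : Subgroup G, IsCompact (U : Set G) → IsOpen (U : Set G) →
        IsCompact (W : Set G) → IsOpen (W : Set G) →
          IsCompact ((U.map α.toMonoidHom : Subgroup G) : Set G) ∧
          IsOpen ((U.map α.toMonoidHom : Subgroup G) : Set G) ∧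
          cosDist (U.map α.toMonoidHom) (W.map α.toMonoidHom) = cosDist U W) := by
  refine ⟨fun U W hUc hUo hWc hWo => ?_, fun U W X hUc hUo hWc hWo hXc hXo => ?_,
    fun α hα hαs U W hUc hUo _ _ => ?_⟩
  · exact ⟨cosDist_nonneg U W, cosDist_comm U W, cosDist_eq_zero_iff
      (Subgroup.commensurable_of_isCompact_of_isOpen hUc hUo hWc hWo)⟩
  · exact cosDist_triangle (Subgroup.commensurable_of_isCompact_of_isOpen hUc hUo hWc hWo)
      (Subgroup.commensurable_of_isCompact_of_isOpen hWc hWo hXc hXo)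
  · let e : G ≃ₜ G := { α.toEquiv with continuous_toFun := hα, continuous_invFun := hαs }
    have hU : ((U.map α.toMonoidHom : Subgroup G) : Set G) = e '' U := Subgroup.coe_map _ _
    exact ⟨hU ▸ e.isCompact_image.mpr hUc, hU ▸ e.isOpen_image.mpr hUo,
      cosDist_map_of_injective α.injective U W⟩

/-- Let `G` be a t.d.l.c. group.  Then
`d(U,V) = log([U : U ∩ V][V : U ∩ V])` is a metric on the set of compact open subgroups of
`G` (it vanishes exactly on the diagonal, is symmetric, and satisfies the triangle
inequality), and every topological group automorphism of `G` acts on the compact open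
subgroups by isometries. -/
theorem cosDist_is_metric_and_aut_isometric {G : Type*} [Group G] [TopologicalSpace G]
    [IsTopologicalGroup G] [T2Space G] [LocallyCompactSpace G] [TotallyDisconnectedSpace G] :
    (∀ U W : Subgroup G, IsCompact (U : Set G) → IsOpen (U : Set G) →
      IsCompact (W : Set G) → IsOpen (W : Set G) →
        (0 ≤ cosDist U W ∧ cosDist U W = cosDist W U ∧ (cosDist U W = 0 ↔ U = W))) ∧
    (∀ U W X : Subgroup G, IsCompact (U : Set G) → IsOpen (U : Set G) →
      IsCompact (W : Set G) → IsOpen (W : Set G) →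
      IsCompact (X : Set G) → IsOpen (X : Set G) →
        cosDist U X ≤ cosDist U W + cosDist W X) ∧
    (∀ α : G ≃* G, Continuous ⇑α → Continuous ⇑α.symm →
      ∀ U W : Subgroup G, IsCompact (U : Set G) → IsOpen (U : Set G) →
        IsCompact (W : Set G) → IsOpen (W : Set G) →
          IsCompact ((U.map α.toMonoidHom : Subgroup G) : Set G) ∧
          IsOpen ((U.map α.toMonoidHom : Subgroup G) : Set G) ∧
          cosDist (U.map α.toMonoidHom) (W.map α.toMonoidHom) = cosDist U W) :=
  cosDist_is_metric_and_aut_isometric_general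
end

section
/- Suppose F ≤ Sym(Ω) is 2-transitive and P is a bi-infinite path in the regular tree T (with deg(T) = |Ω|). Then there exists h ∈ U(F) hyperbolic with translation length l(h) = 1 and axis(h) = P. -/
/-!
Root the tree at `p 0`. On the path the translation `p i ↦ p (i + 1)` is prescribed, and
2-transitivity provides at each `p i` a local permutation in `F` sending the colours towards
`p (i + 1)` and `p (i - 1)` to those towards `p (i + 2)` and `p i`. Off the path the map is
grown outward: a child `v` of `u` goes to the neighbour of the image of `u` whose colour is the
local permutation at `u` applied to `c u v`, and the local permutation at `v` is any element of
`F` matching the colour of the edge back to `u` (transitivity of `F` suffices here). The result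
is a locally bijective endomorphism of a tree, hence an automorphism, whose local actions are
the chosen permutations.
-/

namespace SimpleGraph

variable {V W : Type*} {G : SimpleGraph V} {G' : SimpleGraph W}

def Hom.IsLocallyInjective (f : G →g G') : Prop :=
  ∀ ⦃u v w : V⦄, G.Adj u v → G.Adj u w → f v = f w → v = w

def Hom.IsLocallySurjective (f : G →g G') : Prop :=
  ∀ ⦃u : V⦄ ⦃w' : W⦄, G'.Adj (f u) w' → ∃ w, G.Adj u w ∧ f w = w'

theorem IsAcyclic.length_eq_dist (hG : G.IsAcyclic) {u v : V} {p : G.Walk u v} (hp : p.IsPath) :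
    p.length = G.dist u v := by
  obtain ⟨q, hq, hlen⟩ := p.reachable.exists_path_of_dist
  have hpq : p = q := congrArg Subtype.val ((hG.subsingleton_path u v).elim ⟨p, hp⟩ ⟨q, hq⟩)
  rw [hpq, hlen]

namespace Hom.IsLocallyInjective

variable {f : G →g G'}

theorem isPath_map (hf : f.IsLocallyInjective) (hG' : G'.IsAcyclic) {u v : V} {p : G.Walk u v}
    (hp : p.IsPath) : (p.map f).IsPath := by
  induction p with
  | nil => simp
  | @cons a b c hab q ih =>
    rw [Walk.cons_isPath_iff] at hp
    rw [Walk.map_cons, Walk.cons_isPath_iff]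
    refine ⟨ih hp.1, fun hmem => ?_⟩
    have hsnd := hG'.eq_snd_of_adj_start (ih hp.1) (f.map_adj hab).symm hmem
    cases q with
    | nil => exact (f.map_adj hab).ne hsnd
    | @cons _ d _ hbd q' =>
      obtain rfl : a = d := hf hab.symm hbd (by simpa using hsnd)
      exact hp.2 (by simp)

theorem dist_map (hf : f.IsLocallyInjective) (hG' : G'.IsAcyclic) {u v : V} (h : G.Reachable u v) :
    G'.dist (f u) (f v) = G.dist u v := by
  obtain ⟨p, hp, hlen⟩ := h.exists_path_of_dist
  rw [← hlen, ← p.length_map f, hG'.length_eq_dist (hf.isPath_map hG' hp)]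

theorem injective (hf : f.IsLocallyInjective) (hG : G.Preconnected) (hG' : G'.IsAcyclic) :
    Function.Injective f := fun u v huv =>
  (hG u v).dist_eq_zero_iff.mp (by rw [← hf.dist_map hG' (hG u v), huv, dist_self])

theorem adj_iff (hf : f.IsLocallyInjective) (hG : G.Preconnected) (hG' : G'.IsAcyclic) {u v : V} :
    G'.Adj (f u) (f v) ↔ G.Adj u v := by
  rw [← dist_eq_one_iff_adj, hf.dist_map hG' (hG u v), dist_eq_one_iff_adj]

end Hom.IsLocallyInjective

theorem Hom.IsLocallySurjective.surjective {f : G →g G'} (hf : f.IsLocallySurjective) [Nonempty V]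
    (hG' : G'.Preconnected) : Function.Surjective f := by
  obtain ⟨x⟩ := ‹Nonempty V›
  suffices ∀ {a b : W} (q : G'.Walk a b), a ∈ Set.range f → b ∈ Set.range f from
    fun y => this (hG' (f x) y).some ⟨x, rfl⟩
  intro a b q
  induction q with
  | nil => exact id
  | cons hab _ ih =>
    rintro ⟨u, rfl⟩
    obtain ⟨w, -, rfl⟩ := hf hab
    exact ih ⟨w, rfl⟩

noncomputable def Hom.isoOfIsLocallyBijective (f : G →g G') (hG : G.Connected) (hG' : G'.IsTree)
    (hinj : f.IsLocallyInjective) (hsurj : f.IsLocallySurjective) : G ≃g G' :=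
  haveI := hG.nonempty
  { Equiv.ofBijective f ⟨hinj.injective hG.preconnected hG'.isAcyclic,
      hsurj.surjective hG'.connected.preconnected⟩ with
    map_rel_iff' := hinj.adj_iff hG.preconnected hG'.isAcyclic }

theorem Reachable.exists_adj_dist_lt {x v : V} (h : G.Reachable x v) (hv : v ≠ x) :
    ∃ w, G.Adj v w ∧ G.dist x w < G.dist x v := by
  obtain ⟨q, hq⟩ := h.symm.exists_walk_length_eq_dist
  cases q with
  | nil => exact absurd rfl hv
  | cons hvw q =>
    refine ⟨_, hvw, ?_⟩
    rw [dist_comm, dist_comm (u := x), ← hq, Walk.length_cons]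
    exact Nat.lt_succ_of_le (dist_le q)

noncomputable def stepToward (G : SimpleGraph V) (x v : V) : V :=
  @Classical.epsilon V ⟨v⟩ fun w => G.Adj v w ∧ G.dist x w < G.dist x v

theorem Reachable.stepToward_spec {x v : V} (h : G.Reachable x v) (hv : v ≠ x) :
    G.Adj v (G.stepToward x v) ∧ G.dist x (G.stepToward x v) < G.dist x v :=
  Classical.epsilon_spec (h.exists_adj_dist_lt hv)

theorem IsTree.eq_of_adj_of_dist_lt (hG : G.IsTree) {x v w₁ w₂ : V} (h₁ : G.Adj v w₁)
    (h₂ : G.Adj v w₂) (hd₁ : G.dist x w₁ < G.dist x v) (hd₂ : G.dist x w₂ < G.dist x v) :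
    w₁ = w₂ := by
  obtain ⟨q₁, -, hq₁⟩ := hG.connected.exists_path_of_dist x w₁
  obtain ⟨q₂, -, hq₂⟩ := hG.connected.exists_path_of_dist x w₂
  have hlen : ∀ {w} (q : G.Walk x w) (h : G.Adj v w), q.length = G.dist x w →
      G.dist x w < G.dist x v → (q.concat h.symm).IsPath := fun q h hq hd => by
    refine Walk.isPath_of_length_eq_dist _ ?_
    have := hG.dist_eq_dist_add_one_of_adj x h
    rw [Walk.length_concat]
    omega
  obtain ⟨rfl, -⟩ := Walk.concat_inj (congrArg Subtype.val
    ((hG.isAcyclic.subsingleton_path x v).elim ⟨_, hlen q₁ h₁ hq₁ hd₁⟩ ⟨_, hlen q₂ h₂ hq₂ hd₂⟩))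
  rfl

theorem IsTree.stepToward_eq (hG : G.IsTree) {x v w : V} (hvw : G.Adj v w)
    (hd : G.dist x w < G.dist x v) : G.stepToward x v = w := by
  have hv : v ≠ x := by rintro rfl; simp at hd
  obtain ⟨hadj, hlt⟩ := (hG.connected x v).stepToward_spec hv
  exact hG.eq_of_adj_of_dist_lt hadj hvw hlt hd

section BiInfinitePath

variable {p : ℤ → V}

theorem IsTree.dist_add_natCast (hG : G.IsTree) (hinj : Function.Injective p)
    (hadj : ∀ i, G.Adj (p i) (p (i + 1))) (n : ℕ) (i : ℤ) : G.dist (p i) (p (i + n)) = n := by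
  induction n using Nat.twoStepInduction generalizing i with
  | zero => simp
  | one => simpa using hadj i
  | more n ih₀ ih₁ =>
    have hfar := ih₁ (i + 1)
    have hnear := ih₀ (i + 2)
    rw [show i + 1 + ↑(n + 1) = i + ↑(n + 2) by push_cast; ring] at hfar
    rw [show i + 2 + ↑n = i + ↑(n + 2) by push_cast; ring] at hnear
    have hstep : G.Adj (p (i + 1)) (p (i + 2)) := by
      rw [show i + 2 = i + 1 + 1 by ring]; exact hadj (i + 1)
    rw [dist_comm] at hfar hnear ⊢
    rcases hG.dist_eq_dist_add_one_of_adj (p (i + ↑(n + 2))) (hadj i) with h | h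
    · omega
    · have := hinj (hG.eq_of_adj_of_dist_lt (x := p (i + ↑(n + 2))) (hadj i).symm hstep
        (by omega) (by omega))
      omega

theorem IsTree.dist_eq_natAbs (hG : G.IsTree) (hinj : Function.Injective p)
    (hadj : ∀ i, G.Adj (p i) (p (i + 1))) (i j : ℤ) : G.dist (p i) (p j) = (j - i).natAbs := by
  rcases Int.natAbs_eq (j - i) with h | h
  · have := hG.dist_add_natCast hinj hadj (j - i).natAbs i
    rwa [← h, add_sub_cancel] at this
  · have := hG.dist_add_natCast hinj hadj (j - i).natAbs j
    rwa [← neg_eq_iff_eq_neg.mpr h, neg_sub, add_sub_cancel, dist_comm] at this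

theorem IsTree.eq_add_one_or_eq_sub_one_of_adj (hG : G.IsTree) (hinj : Function.Injective p)
    (hadj : ∀ i, G.Adj (p i) (p (i + 1))) {i j : ℤ} (h : G.Adj (p i) (p j)) :
    j = i + 1 ∨ j = i - 1 := by
  have := hG.dist_eq_natAbs hinj hadj i j
  rw [dist_eq_one_iff_adj.mpr h] at this
  omega

theorem IsTree.mem_range_of_adj_of_dist_lt (hG : G.IsTree) (hinj : Function.Injective p)
    (hadj : ∀ i, G.Adj (p i) (p (i + 1))) {i : ℤ} {w : V} (hw : G.Adj (p i) w)
    (hd : G.dist (p 0) w < G.dist (p 0) (p i)) : w ∈ Set.range p := by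
  have hdist := hG.dist_eq_natAbs hinj hadj 0
  rcases lt_trichotomy i 0 with hi | rfl | hi
  · refine ⟨i + 1, hG.eq_of_adj_of_dist_lt (hadj i) hw ?_ hd⟩
    rw [hdist, hdist]; omega
  · simp at hd
  · refine ⟨i - 1, hG.eq_of_adj_of_dist_lt ?_ hw ?_ hd⟩
    · simpa using (hadj (i - 1)).symm
    · rw [hdist, hdist]; omega

end BiInfinitePath

end SimpleGraph

open SimpleGraph

section Extension

variable {V Ω : Type*} (T : SimpleGraph V) (c : V → V → Ω) (r : V) (A : Set V) (φ : V → V)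
  (τ : V → Equiv.Perm Ω) (nbr : V → Ω → V) (ρ : Ω → Ω → Equiv.Perm Ω)

open Classical in
/-- The image of `v` and the local permutation at `v`, for `nbr x a` the neighbour of `x` of
colour `a` and `ρ a b` a permutation sending `a` to `b`. The distance test only makes the
recursion well founded: it holds for every `v ≠ r` in a connected graph. -/
noncomputable def growFrom (v : V) : V × Equiv.Perm Ω :=
  if _ : v ∉ A ∧ T.dist r (T.stepToward r v) < T.dist r v then
    let u := T.stepToward r v
    let w := nbr (growFrom u).1 ((growFrom u).2 (c u v))
    (w, ρ (c v u) (c w (growFrom u).1))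
  else (φ v, τ v)
termination_by T.dist r v
decreasing_by all_goals exact ‹_ ∧ _›.2

local notation "𝒢" => growFrom T c r A φ τ nbr ρ

variable {T c r A φ τ nbr ρ}

theorem growFrom_of_mem {v : V} (hv : v ∈ A) : 𝒢 v = (φ v, τ v) := by
  rw [growFrom, dif_neg fun h => h.1 hv]

theorem growFrom_fst_of_not_mem (hT : T.Connected) (hr : r ∈ A) {v : V} (hv : v ∉ A) :
    (𝒢 v).1 =
      nbr (𝒢 (T.stepToward r v)).1 ((𝒢 (T.stepToward r v)).2 (c (T.stepToward r v) v)) := by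
  rw [growFrom, dif_pos ⟨hv, ((hT r v).stepToward_spec fun h => hv (h ▸ hr)).2⟩]

theorem growFrom_snd_of_not_mem (hT : T.Connected) (hr : r ∈ A) {v : V} (hv : v ∉ A) :
    (𝒢 v).2 = ρ (c v (T.stepToward r v)) (c (𝒢 v).1 (𝒢 (T.stepToward r v)).1) := by
  rw [growFrom, dif_pos ⟨hv, ((hT r v).stepToward_spec fun h => hv (h ▸ hr)).2⟩]

theorem growFrom_snd_mem (hT : T.Connected) (hr : r ∈ A) {F : Subgroup (Equiv.Perm Ω)}
    (hτ : ∀ v ∈ A, τ v ∈ F) (hρ : ∀ a b, ρ a b ∈ F) (v : V) : (𝒢 v).2 ∈ F := by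
  by_cases hv : v ∈ A
  · simpa [growFrom_of_mem hv] using hτ v hv
  · rw [growFrom_snd_of_not_mem hT hr hv]
    exact hρ _ _

theorem growFrom_adj (hT : T.IsTree) (hr : r ∈ A)
    (hA : ∀ v ∈ A, ∀ w, T.Adj v w → T.dist r w < T.dist r v → w ∈ A)
    (hφ : ∀ u ∈ A, ∀ v ∈ A, T.Adj u v → T.Adj (φ u) (φ v) ∧ c (φ u) (φ v) = τ u (c u v))
    (hnbr : ∀ x a, T.Adj x (nbr x a) ∧ c x (nbr x a) = a) (hρ : ∀ a b, ρ a b a = b)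
    {u v : V} (huv : T.Adj u v) :
    T.Adj (𝒢 u).1 (𝒢 v).1 ∧ c (𝒢 u).1 (𝒢 v).1 = (𝒢 u).2 (c u v) := by
  have parent_child : ∀ {u v}, T.Adj u v → T.dist r u < T.dist r v →
      (T.Adj (𝒢 u).1 (𝒢 v).1 ∧ c (𝒢 u).1 (𝒢 v).1 = (𝒢 u).2 (c u v)) ∧
      (T.Adj (𝒢 v).1 (𝒢 u).1 ∧ c (𝒢 v).1 (𝒢 u).1 = (𝒢 v).2 (c v u)) := by
    intro u v huv hd
    by_cases hv : v ∈ A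
    · have hu : u ∈ A := hA v hv u huv.symm hd
      simp only [growFrom_of_mem hu, growFrom_of_mem hv]
      exact ⟨hφ u hu v hv huv, hφ v hv u hu huv.symm⟩
    · have hs := hT.stepToward_eq huv.symm hd
      have hchild : T.Adj (𝒢 u).1 (𝒢 v).1 ∧ c (𝒢 u).1 (𝒢 v).1 = (𝒢 u).2 (c u v) := by
        rw [growFrom_fst_of_not_mem hT.connected hr hv, hs]
        exact hnbr _ _
      refine ⟨hchild, hchild.1.symm, ?_⟩
      rw [growFrom_snd_of_not_mem hT.connected hr hv, hs, hρ]
  rcases hT.dist_eq_dist_add_one_of_adj r huv with hd | hd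
  · exact (parent_child huv.symm (by omega)).2
  · exact (parent_child huv (by omega)).1

end Extension

theorem exists_iso_extending {V Ω : Type*} {T : SimpleGraph V} (hT : T.IsTree) {c : V → V → Ω}
    (hc : ∀ v, Set.BijOn (c v) (T.neighborSet v) Set.univ) {F : Subgroup (Equiv.Perm Ω)}
    (hF : ∀ a b, ∃ f ∈ F, f a = b) {r : V} {A : Set V} (hr : r ∈ A)
    (hA : ∀ v ∈ A, ∀ w, T.Adj v w → T.dist r w < T.dist r v → w ∈ A)
    {φ : V → V} {τ : V → Equiv.Perm Ω} (hτ : ∀ v ∈ A, τ v ∈ F)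
    (hφ : ∀ u ∈ A, ∀ v ∈ A, T.Adj u v → T.Adj (φ u) (φ v) ∧ c (φ u) (φ v) = τ u (c u v)) :
    ∃ (h : T ≃g T) (g : V → Equiv.Perm Ω), (∀ v, g v ∈ F) ∧
      (∀ u v, T.Adj u v → c (h u) (h v) = g u (c u v)) ∧ ∀ v ∈ A, h v = φ v := by
  choose nbr hnbr using fun x a => (hc x).surjOn (Set.mem_univ a)
  choose ρ hρF hρ using hF
  have hadj {u v : V} (huv : T.Adj u v) := growFrom_adj hT hr hA hφ hnbr hρ huv
  let f : T →g T := ⟨fun v => (growFrom T c r A φ τ nbr ρ v).1, fun h => (hadj h).1⟩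
  have hinj : f.IsLocallyInjective := fun u v w huv huw he =>
    (hc u).injOn huv huw <| (growFrom T c r A φ τ nbr ρ u).2.injective <| by
      rw [← (hadj huv).2, ← (hadj huw).2]
      exact congrArg (c (f u)) he
  have hsurj : f.IsLocallySurjective := fun u w hw => by
    refine ⟨nbr u ((growFrom T c r A φ τ nbr ρ u).2⁻¹ (c (f u) w)), (hnbr _ _).1,
      (hc (f u)).injOn ?_ hw ?_⟩
    · exact (hadj (hnbr _ _).1).1
    · simp [f, (hadj (hnbr _ _).1).2, (hnbr _ _).2]
  exact ⟨f.isoOfIsLocallyBijective hT.connected hT hinj hsurj,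
    fun v => (growFrom T c r A φ τ nbr ρ v).2, growFrom_snd_mem hT.connected hr hτ hρF,
    fun u v huv => (hadj huv).2, fun v hv => congrArg Prod.fst (growFrom_of_mem hv)⟩

theorem Subgroup.exists_mem_apply_eq_of_twoTransitive {Ω : Type*} {F : Subgroup (Equiv.Perm Ω)}
    (h2 : ∀ a b a' b' : Ω, a ≠ b → a' ≠ b' → ∃ f ∈ F, f a = a' ∧ f b = b') (a a' : Ω) :
    ∃ f ∈ F, f a = a' := by
  by_cases! hΩ : ∃ b, b ≠ a
  · obtain ⟨b, hb⟩ := hΩ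
    have : Nontrivial Ω := nontrivial_of_ne b a hb
    obtain ⟨b', hb'⟩ := exists_ne a'
    obtain ⟨f, hf, hfa, -⟩ := h2 a b a' b' hb.symm hb'.symm
    exact ⟨f, hf, hfa⟩
  · exact ⟨1, F.one_mem, (hΩ a').symm⟩

theorem exists_shift_localPerm {V Ω : Type*} {T : SimpleGraph V} {c : V → V → Ω}
    (hc : ∀ v, Set.InjOn (c v) (T.neighborSet v)) {F : Subgroup (Equiv.Perm Ω)}
    (h2 : ∀ a b a' b' : Ω, a ≠ b → a' ≠ b' → ∃ f ∈ F, f a = a' ∧ f b = b')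
    {p : ℤ → V} (hinj : Function.Injective p) (hadj : ∀ i, T.Adj (p i) (p (i + 1))) :
    ∃ f : ℤ → Equiv.Perm Ω, ∀ i, f i ∈ F ∧ f i (c (p i) (p (i + 1))) = c (p (i + 1)) (p (i + 2)) ∧
      f i (c (p i) (p (i - 1))) = c (p (i + 1)) (p i) := by
  have hne : ∀ i, c (p i) (p (i + 1)) ≠ c (p i) (p (i - 1)) := fun i he => by
    have := hinj ((hc (p i)) (hadj i) (by simpa using (hadj (i - 1)).symm) he)
    omega
  have hne' : ∀ i, c (p (i + 1)) (p (i + 2)) ≠ c (p (i + 1)) (p i) := fun i => by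
    simpa [add_assoc, one_add_one_eq_two] using hne (i + 1)
  choose f hf using fun i => h2 _ _ _ _ (hne i) (hne' i)
  exact ⟨f, hf⟩

theorem shift_adj_and_colour {V Ω : Type*} {T : SimpleGraph V} (hT : T.IsTree) (c : V → V → Ω)
    {p : ℤ → V} (hinj : Function.Injective p) (hadj : ∀ i, T.Adj (p i) (p (i + 1)))
    {f : ℤ → Equiv.Perm Ω} (hup : ∀ i, f i (c (p i) (p (i + 1))) = c (p (i + 1)) (p (i + 2)))
    (hdown : ∀ i, f i (c (p i) (p (i - 1))) = c (p (i + 1)) (p i)) {i j : ℤ}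
    (hij : T.Adj (p i) (p j)) :
    T.Adj (p (i + 1)) (p (j + 1)) ∧ c (p (i + 1)) (p (j + 1)) = f i (c (p i) (p j)) := by
  rcases hT.eq_add_one_or_eq_sub_one_of_adj hinj hadj hij with rfl | rfl
  · rw [hup, add_assoc, one_add_one_eq_two]
    exact ⟨by simpa [add_assoc, one_add_one_eq_two] using hadj (i + 1), rfl⟩
  · rw [hdown, sub_add_cancel]
    exact ⟨(hadj i).symm, rfl⟩

theorem localAction_eq {V Ω : Type*} {T : SimpleGraph V} {c : V → V → Ω}
    (hc : ∀ v, Set.SurjOn (c v) (T.neighborSet v) Set.univ)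
    {σ : Equiv.Perm V → V → Equiv.Perm Ω}
    (hσ : ∀ g : Equiv.Perm V, (∀ u w : V, T.Adj u w ↔ T.Adj (g u) (g w)) →
      ∀ v u : V, T.Adj v u → σ g v (c v u) = c (g v) (g u))
    (h : T ≃g T) {v : V} {f : Equiv.Perm Ω} (hf : ∀ u, T.Adj v u → c (h v) (h u) = f (c v u)) :
    σ h.toEquiv v = f := by
  ext a
  obtain ⟨u, hu, rfl⟩ := hc v (Set.mem_univ a)
  exact (hσ h.toEquiv (fun _ _ => h.map_adj_iff.symm) v u hu).trans (hf u hu)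

theorem exists_translation_of_length_one_general {V Ω : Type*} (T : SimpleGraph V) (hT : T.IsTree)
    (c : V → V → Ω)
    (hbij : ∀ v : V, Set.BijOn (fun u => c v u) (T.neighborSet v) Set.univ)
    (σ : Equiv.Perm V → V → Equiv.Perm Ω)
    (hσ : ∀ g : Equiv.Perm V, (∀ u w : V, T.Adj u w ↔ T.Adj (g u) (g w)) →
      ∀ v u : V, T.Adj v u → σ g v (c v u) = c (g v) (g u))
    (F : Subgroup (Equiv.Perm Ω))
    (h2trans : ∀ a b a' b' : Ω, a ≠ b → a' ≠ b' → ∃ f ∈ F, f a = a' ∧ f b = b')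
    (p : ℤ → V) (hinj : Function.Injective p) (hadj : ∀ i : ℤ, T.Adj (p i) (p (i + 1))) :
    ∃ h : Equiv.Perm V, (∀ u w : V, T.Adj u w ↔ T.Adj (h u) (h w)) ∧
      (∀ v : V, σ h v ∈ F) ∧ ∀ i : ℤ, h (p i) = p (i + 1) := by
  obtain ⟨f, hf⟩ := exists_shift_localPerm (fun v => (hbij v).injOn) h2trans hinj hadj
  have hindex : ∀ i, Function.invFun p (p i) = i := Function.leftInverse_invFun hinj
  obtain ⟨h, g, hgF, hg, hφ⟩ := exists_iso_extending hT hbij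
    (F.exists_mem_apply_eq_of_twoTransitive h2trans) (r := p 0) (A := Set.range p) ⟨0, rfl⟩
    (by rintro _ ⟨i, rfl⟩ w hw hd; exact hT.mem_range_of_adj_of_dist_lt hinj hadj hw hd)
    (φ := fun v => p (Function.invFun p v + 1)) (τ := fun v => f (Function.invFun p v))
    (by rintro _ ⟨i, rfl⟩; exact (hf _).1)
    (by
      rintro _ ⟨i, rfl⟩ _ ⟨j, rfl⟩ hij
      simpa [hindex] using shift_adj_and_colour hT c hinj hadj (fun i => (hf i).2.1)
        (fun i => (hf i).2.2) hij)
  refine ⟨h.toEquiv, fun u w => h.map_adj_iff.symm, fun v => ?_, fun i => ?_⟩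
  · rw [localAction_eq (fun v => (hbij v).surjOn) hσ h (hg v)]
    exact hgF v
  · simpa [hindex] using hφ (p i) ⟨i, rfl⟩

/-- Suppose `F ≤ Sym(Ω)` is 2-transitive and `P` is a bi-infinite path in
the legally coloured regular tree `T`.  Then there exists `h ∈ U(F)` (an automorphism of
`T` all of whose local actions lie in `F`) which is hyperbolic with translation length `1`
and whose axis is `P`, i.e. `h` translates `P` by one step. -/
theorem exists_translation_of_length_one {V Ω : Type*} (T : SimpleGraph V) (hT : T.IsTree)
    (c : V → V → Ω)
    (hsym : ∀ u v : V, T.Adj u v → c u v = c v u)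
    (hbij : ∀ v : V, Set.BijOn (fun u => c v u) (T.neighborSet v) Set.univ)
    (σ : Equiv.Perm V → V → Equiv.Perm Ω)
    (hσ : ∀ g : Equiv.Perm V, (∀ u w : V, T.Adj u w ↔ T.Adj (g u) (g w)) →
      ∀ v u : V, T.Adj v u → σ g v (c v u) = c (g v) (g u))
    (F : Subgroup (Equiv.Perm Ω))
    (h2trans : ∀ a b a' b' : Ω, a ≠ b → a' ≠ b' → ∃ f ∈ F, f a = a' ∧ f b = b')
    (p : ℤ → V) (hinj : Function.Injective p) (hadj : ∀ i : ℤ, T.Adj (p i) (p (i + 1))) :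
    ∃ h : Equiv.Perm V, (∀ u w : V, T.Adj u w ↔ T.Adj (h u) (h w)) ∧
      (∀ v : V, σ h v ∈ F) ∧ ∀ i : ℤ, h (p i) = p (i + 1) :=
  exists_translation_of_length_one_general T hT c hbij σ hσ F h2trans p hinj hadj
end

section
/- Let (v_0, v_1, …, v_k, v_{k+1}) be a path in the regular tree T with legal colouring c, and set e_i = (v_i, v_{i+1}) for 0 ≤ i ≤ k. Then in U(F), [U_{e_0} : U_{e_0} ∩ U_{e_k}] = ∏_{i=0}^{k-1} |F_{c(e_i)} / (F_{c(e_i)} ∩ F_{c(e_{i+1})})|. -/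
/-!
Let `G i ≤ U(F)` fix `v 0, …, v (i + 1)`. An automorphism of a tree fixing both ends of a
non-backtracking walk fixes the whole walk, so `U_{e 0} ∩ U_{e k} = G k` and the index
telescopes along `G 0 ≥ G 1 ≥ ⋯ ≥ G k`. By orbit–stabiliser, `[G i : G (i + 1)]` is the size of
the `G i`-orbit of `v (i + 2)`. Reading colours at `b = v (i + 1)` maps this orbit into the
`F_{a₀}`-orbit of `c(e (i + 1))`, where `a₀ = c(e i)`: an element of `G i` acts at `b` through a
permutation of `F` fixing `a₀`. The map is onto because every `π ∈ F_{a₀}` is realised by an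
element of `U(F)`: fix the branch at `b` through `v i`, and move every other vertex `u` to the
end of the walk from `b` whose colour word is `π` applied letterwise to that of the geodesic
from `b` to `u`.
-/

open SimpleGraph

lemma SimpleGraph.IsAcyclic.apply_getVert_eq {V : Type*} {T : SimpleGraph V} (hA : T.IsAcyclic)
    {φ : T →g T} (hφ : Function.Injective φ) {x y : V} {p : T.Walk x y} (hp : p.IsPath)
    (hx : φ x = x) (hy : φ y = y) (t : ℕ) : φ (p.getVert t) = p.getVert t := by
  have h := (hA.subsingleton_path x y).elim ⟨(p.map φ).copy hx hy, by simpa using hp.map hφ⟩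
    ⟨p, hp⟩
  rw [← Walk.getVert_map, ← Walk.getVert_copy _ _ hx hy, Subtype.mk.inj h]

lemma Subgroup.relIndex_eq_ncard_orbit {G X : Type*} [Group G] [MulAction G X]
    {H B : Subgroup G} {x : X} (h : ∀ g ∈ B, g ∈ H ↔ g • x = x) :
    H.relIndex B = (MulAction.orbit B x).ncard := by
  have : H.subgroupOf B = MulAction.stabilizer B x := by
    ext ⟨g, hg⟩
    simp [Subgroup.mem_subgroupOf, MulAction.mem_stabilizer_iff, h g hg]
  rw [Subgroup.relIndex, this, MulAction.index_stabilizer]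

lemma Subgroup.relIndex_eq_prod_relIndex_succ {G : Type*} [Group G] {H : ℕ → Subgroup G}
    (hH : Antitone H) (n : ℕ) :
    (H n).relIndex (H 0) = ∏ i ∈ Finset.range n, (H (i + 1)).relIndex (H i) := by
  induction n with
  | zero => simp
  | succ n ih =>
    rw [← Subgroup.relIndex_mul_relIndex _ _ _ (hH n.le_succ) (hH n.zero_le), ih,
      Finset.prod_range_succ, mul_comm]

namespace BurgerMozes

variable {V Ω : Type*}

structure IsLegalColouring (T : SimpleGraph V) (c : V → V → Ω) : Prop where
  symm : ∀ u v, T.Adj u v → c u v = c v u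
  bijOn : ∀ v, Set.BijOn (c v) (T.neighborSet v) Set.univ

variable {T : SimpleGraph V} {c : V → V → Ω}

open Classical in
noncomputable def step (T : SimpleGraph V) (c : V → V → Ω) (v : V) (a : Ω) : V :=
  if h : ∃ u, T.Adj v u ∧ c v u = a then h.choose else v

noncomputable def follow (T : SimpleGraph V) (c : V → V → Ω) (x : V) (l : List Ω) : V :=
  l.foldl (step T c) x

@[simp] lemma follow_nil (x : V) : follow T c x [] = x := rfl

@[simp] lemma follow_cons (x : V) (a : Ω) (l : List Ω) :
    follow T c x (a :: l) = follow T c (step T c x a) l := rfl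

lemma follow_append (x : V) (l₁ l₂ : List Ω) :
    follow T c x (l₁ ++ l₂) = follow T c (follow T c x l₁) l₂ :=
  List.foldl_append

def colours (c : V → V → Ω) {x y : V} (p : T.Walk x y) : List Ω :=
  p.darts.map fun d => c d.fst d.snd

@[simp] lemma colours_nil (x : V) : colours c (Walk.nil : T.Walk x x) = [] := rfl

@[simp] lemma colours_cons {x y z : V} (h : T.Adj x y) (p : T.Walk y z) :
    colours c (Walk.cons h p) = c x y :: colours c p := rfl

lemma colours_concat {x y z : V} (p : T.Walk x y) (h : T.Adj y z) :
    colours c (p.concat h) = colours c p ++ [c y z] := by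
  simp [colours]

namespace IsLegalColouring

variable (hc : IsLegalColouring T c)
include hc

lemma exists_adj_colour_eq (v : V) (a : Ω) : ∃ u, T.Adj v u ∧ c v u = a := by
  obtain ⟨u, hu, rfl⟩ := (hc.bijOn v).surjOn (Set.mem_univ a)
  exact ⟨u, hu, rfl⟩

lemma adj_step (v : V) (a : Ω) : T.Adj v (step T c v a) := by
  rw [step, dif_pos (hc.exists_adj_colour_eq v a)]
  exact (hc.exists_adj_colour_eq v a).choose_spec.1

lemma colour_step (v : V) (a : Ω) : c v (step T c v a) = a := by
  rw [step, dif_pos (hc.exists_adj_colour_eq v a)]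
  exact (hc.exists_adj_colour_eq v a).choose_spec.2

lemma eq_of_colour_eq {v u w : V} (hu : T.Adj v u) (hw : T.Adj v w) (h : c v u = c v w) :
    u = w :=
  (hc.bijOn v).injOn hu hw h

lemma step_colour {v u : V} (h : T.Adj v u) : step T c v (c v u) = u :=
  hc.eq_of_colour_eq (hc.adj_step v _) h (hc.colour_step v _)

lemma follow_colours {x y : V} (p : T.Walk x y) : follow T c x (colours c p) = y := by
  induction p with
  | nil => rfl
  | cons h p ih => rwa [colours_cons, follow_cons, hc.step_colour h]

lemma exists_walk_colours_eq (x : V) (l : List Ω) :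
    ∃ p : T.Walk x (follow T c x l), colours c p = l := by
  induction l generalizing x with
  | nil => exact ⟨Walk.nil, rfl⟩
  | cons a l ih =>
    obtain ⟨p, hp⟩ := ih (step T c x a)
    rw [follow_cons]
    exact ⟨Walk.cons (hc.adj_step x a) p, by rw [colours_cons, hp, hc.colour_step]⟩

lemma follow_take_colours {x y : V} (p : T.Walk x y) (t : ℕ) :
    follow T c x ((colours c p).take t) = p.getVert t := by
  induction p generalizing t with
  | nil => simp
  | cons h p ih =>
    cases t with
    | zero => simp
    | succ t => rw [colours_cons, List.take_succ_cons, follow_cons, hc.step_colour h, ih,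
        Walk.getVert_cons_succ]

lemma isChain_colours {x y : V} {p : T.Walk x y} (hp : p.IsPath) :
    (colours c p).IsChain (· ≠ ·) := by
  induction p with
  | nil => exact List.isChain_nil
  | cons h p ih =>
    rw [Walk.cons_isPath_iff] at hp
    cases p with
    | nil => exact List.isChain_singleton _
    | cons h' p' =>
      rw [colours_cons, colours_cons, List.isChain_cons_cons]
      refine ⟨fun hcol => hp.2 ?_, ih hp.1⟩
      rw [hc.eq_of_colour_eq h.symm h' ((hc.symm _ _ h).symm.trans hcol)]
      exact Walk.support_cons _ _ ▸ List.mem_cons_of_mem _ p'.start_mem_support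

lemma isPath_of_isChain_colours (hA : T.IsAcyclic) {x y : V} {p : T.Walk x y}
    (hp : (colours c p).IsChain (· ≠ ·)) : p.IsPath := by
  induction p with
  | nil => exact Walk.IsPath.nil
  | cons h q ih =>
    rw [colours_cons] at hp
    have hq : q.IsPath := ih hp.tail
    refine hq.cons fun hx => ?_
    -- acyclicity: a path from `m` through its neighbour `x` must step to `x` first
    have hsnd := hA.eq_snd_of_adj_start hq h.symm hx
    cases q with
    | nil => exact h.ne (by simpa using hx)
    | cons h' q' =>
      rw [Walk.snd_cons] at hsnd
      subst hsnd
      rw [colours_cons, List.isChain_cons_cons] at hp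
      exact hp.1 (hc.symm _ _ h)

end IsLegalColouring

section Tree

variable (hT : T.IsTree)

noncomputable def geodesic (b u : V) : T.Walk b u :=
  (hT.existsUnique_path b u).exists.choose

lemma isPath_geodesic (b u : V) : (geodesic hT b u).IsPath :=
  (hT.existsUnique_path b u).exists.choose_spec

lemma eq_geodesic {b u : V} {p : T.Walk b u} (hp : p.IsPath) : p = geodesic hT b u :=
  (hT.existsUnique_path b u).unique hp (isPath_geodesic hT b u)

noncomputable def word (c : V → V → Ω) (b u : V) : List Ω :=
  colours c (geodesic hT b u)

lemma colours_eq_word {b u : V} {p : T.Walk b u} (hp : p.IsPath) :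
    colours c p = word hT c b u := by
  rw [word, ← eq_geodesic hT hp]

@[simp] lemma word_self (b : V) : word hT c b b = [] :=
  (colours_eq_word hT Walk.IsPath.nil).symm

lemma word_adj {b u w : V} (h : T.Adj u w) :
    word hT c b w = word hT c b u ++ [c u w] ∨ word hT c b u = word hT c b w ++ [c w u] := by
  by_cases hu : u ∈ (geodesic hT b w).support
  · left
    rw [word, word, ← colours_concat,
      hT.isAcyclic.path_concat (isPath_geodesic hT b u) (isPath_geodesic hT b w) h hu]
  · right
    exact (colours_eq_word hT ((isPath_geodesic hT b w).concat hu h.symm)).symm.trans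
      (colours_concat _ _)

lemma word_of_adj {b u : V} (h : T.Adj b u) : word hT c b u = [c b u] := by
  rcases word_adj hT (b := b) h with hw | hw
  · simpa using hw
  · simp at hw

namespace IsLegalColouring

variable (hc : IsLegalColouring T c)
include hc

lemma follow_word (b u : V) : follow T c b (word hT c b u) = u :=
  hc.follow_colours _

lemma word_follow (b : V) {l : List Ω} (hl : l.IsChain (· ≠ ·)) :
    word hT c b (follow T c b l) = l := by
  obtain ⟨p, hp⟩ := hc.exists_walk_colours_eq b l
  rw [← colours_eq_word hT (hc.isPath_of_isChain_colours hT.isAcyclic (hp ▸ hl)), hp]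

lemma isChain_word (b u : V) : (word hT c b u).IsChain (· ≠ ·) :=
  hc.isChain_colours (isPath_geodesic hT b u)

lemma word_eq_nil_iff {b u : V} : word hT c b u = [] ↔ u = b := by
  refine ⟨fun h => ?_, fun h => h ▸ word_self hT u⟩
  rw [← hc.follow_word hT b u, h, follow_nil]

end IsLegalColouring

end Tree

section Twist

variable (hT : T.IsTree) (c : V → V → Ω) (b : V) (a : Ω) (f : Equiv.Perm Ω)

noncomputable def relabel (u : V) : V :=
  follow T c b ((word hT c b u).map f)

def branch : Set V :=
  {u | (word hT c b u).head? = some a}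

open Classical in
noncomputable def twist (u : V) : V :=
  if u ∈ branch hT c b a then u else relabel hT c b f u

variable {hT c b a f}

@[simp] lemma relabel_self : relabel hT c b f b = b := by
  simp [relabel]

lemma self_not_mem_branch : b ∉ branch hT c b a := by
  simp [branch]

lemma twist_of_mem {u : V} (hu : u ∈ branch hT c b a) : twist hT c b a f u = u :=
  if_pos hu

lemma twist_of_not_mem {u : V} (hu : u ∉ branch hT c b a) :
    twist hT c b a f u = relabel hT c b f u :=
  if_neg hu

@[simp] lemma twist_self : twist hT c b a f b = b := by
  rw [twist_of_not_mem self_not_mem_branch, relabel_self]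

lemma relabel_of_word_eq_append {u w : V} {x : Ω} (h : word hT c b w = word hT c b u ++ [x]) :
    relabel hT c b f w = step T c (relabel hT c b f u) (f x) := by
  rw [relabel, h, List.map_append, follow_append]
  rfl

namespace IsLegalColouring

variable (hc : IsLegalColouring T c)
include hc

lemma word_relabel (u : V) : word hT c b (relabel hT c b f u) = (word hT c b u).map f := by
  refine hc.word_follow hT b ?_
  rw [List.isChain_map]
  exact (hc.isChain_word hT b u).imp fun _ _ hne h => hne (f.injective h)

lemma relabel_inv_relabel (u : V) : relabel hT c b f⁻¹ (relabel hT c b f u) = u := by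
  rw [relabel, hc.word_relabel, List.map_map, Equiv.Perm.coe_inv, Equiv.symm_comp_self,
    List.map_id, hc.follow_word]

lemma adj_relabel {u w : V} (h : T.Adj u w) :
    T.Adj (relabel hT c b f u) (relabel hT c b f w) ∧
      c (relabel hT c b f u) (relabel hT c b f w) = f (c u w) := by
  rcases word_adj hT (b := b) h with hw | hu
  · rw [relabel_of_word_eq_append hw]
    exact ⟨hc.adj_step _ _, hc.colour_step _ _⟩
  · rw [relabel_of_word_eq_append hu, hc.symm _ _ (hc.adj_step _ _).symm, hc.colour_step,
      hc.symm _ _ h]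
    exact ⟨(hc.adj_step _ _).symm, rfl⟩

lemma relabel_mem_branch_iff (hf : f a = a) {u : V} :
    relabel hT c b f u ∈ branch hT c b a ↔ u ∈ branch hT c b a := by
  simp only [branch, Set.mem_ofPred_eq, hc.word_relabel, List.head?_map, Option.map_eq_some_iff]
  refine ⟨fun ⟨x, hx, hfx⟩ => ?_, fun hx => ⟨a, hx, hf⟩⟩
  rwa [← f.injective (hfx.trans hf.symm)]

lemma eq_of_adj_of_mem_branch {u w : V} (h : T.Adj u w) (hu : u ∈ branch hT c b a)
    (hw : w ∉ branch hT c b a) : w = b ∧ word hT c b u = [a] := by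
  simp only [branch, Set.mem_ofPred_eq] at hu hw
  rcases word_adj hT (b := b) h with hwu | huw
  · exact absurd (by rw [hwu, List.head?_append, hu]; rfl) hw
  · cases hnil : word hT c b w with
    | nil =>
      rw [hnil, List.nil_append] at huw
      rw [huw, List.head?_cons, Option.some_inj] at hu
      exact ⟨(hc.word_eq_nil_iff hT).1 hnil, by rw [huw, hu]⟩
    | cons x l => simp_all

lemma relabel_eq_self_of_word_eq (hf : f a = a) {u : V} (h : word hT c b u = [a]) :
    relabel hT c b f u = u := by
  rw [relabel, h, List.map_singleton, hf, ← h, hc.follow_word]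

lemma twist_eq_self_of_adj {x u : V} (hx : x ∈ branch hT c b a) (h : T.Adj x u) :
    twist hT c b a f u = u := by
  by_cases hu : u ∈ branch hT c b a
  · exact twist_of_mem hu
  · rw [(hc.eq_of_adj_of_mem_branch h hx hu).1, twist_self]

lemma twist_eq_relabel_of_adj (hf : f a = a) {x u : V} (hx : x ∉ branch hT c b a)
    (h : T.Adj x u) : twist hT c b a f u = relabel hT c b f u := by
  by_cases hu : u ∈ branch hT c b a
  · rw [twist_of_mem hu,
      hc.relabel_eq_self_of_word_eq hf (hc.eq_of_adj_of_mem_branch h.symm hu hx).2]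
  · exact twist_of_not_mem hu

lemma twist_inv_twist (hf : f a = a) (u : V) : twist hT c b a f⁻¹ (twist hT c b a f u) = u := by
  by_cases hu : u ∈ branch hT c b a
  · rw [twist_of_mem hu, twist_of_mem hu]
  · rw [twist_of_not_mem hu, twist_of_not_mem ((hc.relabel_mem_branch_iff hf).not.2 hu),
      hc.relabel_inv_relabel]

lemma twist_local (hf : f a = a) (x : V) :
    (∀ u, T.Adj x u → c (twist hT c b a f x) (twist hT c b a f u) = c x u) ∨
      ∀ u, T.Adj x u → c (twist hT c b a f x) (twist hT c b a f u) = f (c x u) := by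
  by_cases hx : x ∈ branch hT c b a
  · left
    intro u h
    rw [twist_of_mem hx, hc.twist_eq_self_of_adj hx h]
  · right
    intro u h
    rw [twist_of_not_mem hx, hc.twist_eq_relabel_of_adj hf hx h]
    exact (hc.adj_relabel h).2

lemma adj_twist (hf : f a = a) {x u : V} (h : T.Adj x u) :
    T.Adj (twist hT c b a f x) (twist hT c b a f u) := by
  by_cases hx : x ∈ branch hT c b a
  · rwa [twist_of_mem hx, hc.twist_eq_self_of_adj hx h]
  · rw [twist_of_not_mem hx, hc.twist_eq_relabel_of_adj hf hx h]
    exact (hc.adj_relabel h).1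

lemma adj_twist_iff (hf : f a = a) {x u : V} :
    T.Adj x u ↔ T.Adj (twist hT c b a f x) (twist hT c b a f u) := by
  have hf' : f⁻¹ a = a := by rw [Equiv.Perm.inv_eq_iff_eq, hf]
  refine ⟨hc.adj_twist hf, fun h => ?_⟩
  simpa only [hc.twist_inv_twist hf] using hc.adj_twist (hT := hT) (b := b) hf' h

lemma twist_bijective (hf : f a = a) : Function.Bijective (twist hT c b a f) := by
  have hf' : f⁻¹ a = a := by rw [Equiv.Perm.inv_eq_iff_eq, hf]
  refine Function.bijective_iff_has_inverse.2
    ⟨twist hT c b a f⁻¹, hc.twist_inv_twist hf, fun u => ?_⟩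
  simpa only [inv_inv] using hc.twist_inv_twist (hT := hT) (b := b) hf' u

lemma colour_twist_of_adj (hf : f a = a) {u : V} (h : T.Adj b u) :
    c b (twist hT c b a f u) = f (c b u) := by
  rw [hc.twist_eq_relabel_of_adj hf self_not_mem_branch h, ← (hc.adj_relabel h).2, relabel_self]

end IsLegalColouring

end Twist

section NonBacktracking

variable {v : ℕ → V} {m : ℕ}

def pathColours (c : V → V → Ω) (v : ℕ → V) (t : ℕ) : List Ω :=
  (List.range t).map fun j => c (v j) (v (j + 1))

lemma take_pathColours {s t : ℕ} (h : s ≤ t) :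
    (pathColours c v t).take s = pathColours c v s := by
  rw [pathColours, ← List.map_take, List.take_range, min_eq_left h, pathColours]

namespace IsLegalColouring

variable (hc : IsLegalColouring T c) (hadj : ∀ j < m, T.Adj (v j) (v (j + 1)))
  (hred : ∀ j, j + 2 ≤ m → v j ≠ v (j + 2))
include hc hadj

lemma follow_pathColours {t : ℕ} (ht : t ≤ m) : follow T c (v 0) (pathColours c v t) = v t := by
  induction t with
  | zero => rfl
  | succ t ih =>
    rw [pathColours, List.range_succ, List.map_append, follow_append, ← pathColours,
      ih (by omega), List.map_singleton, follow_cons, hc.step_colour (hadj t (by omega)),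
      follow_nil]

include hred

lemma isChain_pathColours {t : ℕ} (ht : t ≤ m) : (pathColours c v t).IsChain (· ≠ ·) := by
  rw [pathColours, List.isChain_map]
  cases t with
  | zero => exact List.isChain_nil
  | succ t =>
    rw [List.isChain_range_succ]
    intro j hj hcol
    refine hred j (by omega)
      (hc.eq_of_colour_eq (hadj j (by omega)).symm (hadj (j + 1) (by omega)) ?_)
    rw [← hc.symm _ _ (hadj j (by omega)), hcol]

lemma word_pathColours (hT : T.IsTree) {t : ℕ} (ht : t ≤ m) :
    word hT c (v 0) (v t) = pathColours c v t := by
  rw [← hc.follow_pathColours hadj ht, hc.word_follow hT _ (hc.isChain_pathColours hadj hred ht)]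

lemma injOn_Iic (hT : T.IsTree) : Set.InjOn v (Set.Iic m) := by
  intro i hi j hj h
  have hword := hc.word_pathColours hadj hred hT hi
  rw [h, hc.word_pathColours hadj hred hT hj] at hword
  simpa [pathColours] using (congrArg List.length hword).symm

lemma apply_eq_self_of_ends (hT : T.IsTree) {g : Equiv.Perm V}
    (hg : ∀ u w, T.Adj u w ↔ T.Adj (g u) (g w)) (h0 : g (v 0) = v 0) (hm : g (v m) = v m)
    {t : ℕ} (ht : t ≤ m) : g (v t) = v t := by
  have hvt : v t = (geodesic hT (v 0) (v m)).getVert t := by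
    rw [← hc.follow_take_colours, ← word, hc.word_pathColours hadj hred hT le_rfl,
      take_pathColours ht, hc.follow_pathColours hadj ht]
  rw [hvt]
  exact hT.isAcyclic.apply_getVert_eq (φ := ⟨g, (hg _ _).1⟩) g.injective
    (isPath_geodesic hT _ _) h0 hm t

lemma mem_branch_of_le (hT : T.IsTree) {n j : ℕ} (hn : n < m) (hj : j ≤ n) :
    v j ∈ branch hT c (v (n + 1)) (c (v (n + 1)) (v n)) := by
  induction hj using Nat.decreasingInduction with
  | self => simp [branch, word_of_adj hT (hadj n hn).symm]
  | of_succ j hj ih =>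
    by_contra hvj
    have := hc.injOn_Iic hadj hred hT (Set.mem_Iic.2 (by omega)) (Set.mem_Iic.2 (by omega))
      (hc.eq_of_adj_of_mem_branch (hadj j (by omega)).symm ih hvj).1
    omega

end IsLegalColouring

end NonBacktracking

lemma mem_fixingSubgroup_image_Iic {v : ℕ → V} {g : Equiv.Perm V} {n : ℕ} :
    g ∈ fixingSubgroup (Equiv.Perm V) (v '' Set.Iic n) ↔ ∀ j ≤ n, g (v j) = v j := by
  simp [mem_fixingSubgroup_iff]

lemma antitone_inf_fixingSubgroup_image_Iic_succ (UF : Subgroup (Equiv.Perm V)) (v : ℕ → V) :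
    Antitone fun i => UF ⊓ fixingSubgroup (Equiv.Perm V) (v '' Set.Iic (i + 1)) := by
  intro i j hij g hg
  rw [Subgroup.mem_inf, mem_fixingSubgroup_image_Iic] at hg ⊢
  exact ⟨hg.1, fun l hl => hg.2 l (by omega)⟩

lemma inf_stabilizer_stabilizer_eq (UF : Subgroup (Equiv.Perm V)) (v : ℕ → V) :
    UF ⊓ MulAction.stabilizer (Equiv.Perm V) (v 0) ⊓ MulAction.stabilizer (Equiv.Perm V) (v 1) =
      UF ⊓ fixingSubgroup (Equiv.Perm V) (v '' Set.Iic 1) := by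
  ext g
  simp [mem_fixingSubgroup_image_Iic, Nat.le_one_iff_eq_zero_or_eq_one, and_assoc]

section UniversalGroup

variable {σ : Equiv.Perm V → V → Equiv.Perm Ω} {F : Subgroup (Equiv.Perm Ω)}
  {UF : Subgroup (Equiv.Perm V)}

namespace IsLegalColouring

variable (hc : IsLegalColouring T c)
  (hσ : ∀ g : Equiv.Perm V, (∀ u w : V, T.Adj u w ↔ T.Adj (g u) (g w)) →
    ∀ v u : V, T.Adj v u → σ g v (c v u) = c (g v) (g u))
  (hUF : ∀ g : Equiv.Perm V, g ∈ UF ↔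
    ((∀ u w : V, T.Adj u w ↔ T.Adj (g u) (g w)) ∧ ∀ v : V, σ g v ∈ F))
  (hT : T.IsTree) {v : ℕ → V} {m : ℕ} (hadj : ∀ j < m + 1, T.Adj (v j) (v (j + 1)))
  (hred : ∀ j, j + 2 ≤ m + 1 → v j ≠ v (j + 2))

include hc hσ in
lemma localAction_eq {g : Equiv.Perm V} (hg : ∀ u w : V, T.Adj u w ↔ T.Adj (g u) (g w)) {w : V}
    {π : Equiv.Perm Ω} (h : ∀ u, T.Adj w u → c (g w) (g u) = π (c w u)) : σ g w = π := by
  ext a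
  obtain ⟨u, hu, rfl⟩ := hc.exists_adj_colour_eq w a
  rw [hσ g hg w u hu, h u hu]

include hc hσ hUF in
lemma exists_mem_fixing_branch (b : V) {a : Ω} {π : Equiv.Perm Ω} (hπ : π ∈ F)
    (ha : π a = a) :
    ∃ g ∈ UF, g b = b ∧ (∀ u ∈ branch hT c b a, g u = u) ∧
      ∀ u, T.Adj b u → c b (g u) = π (c b u) := by
  set g := Equiv.ofBijective _ (hc.twist_bijective (hT := hT) (b := b) ha)
  have hg : ∀ u w : V, T.Adj u w ↔ T.Adj (g u) (g w) := fun _ _ => hc.adj_twist_iff ha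
  refine ⟨g, (hUF g).2 ⟨hg, fun w => ?_⟩, twist_self, fun u => twist_of_mem,
    fun u => hc.colour_twist_of_adj ha⟩
  rcases hc.twist_local ha w with h | h
  · rw [hc.localAction_eq hσ hg (π := 1) h]
    exact F.one_mem
  · rwa [hc.localAction_eq hσ hg h]

include hc hσ hUF in
lemma ncard_orbit_eq {K : Subgroup (Equiv.Perm V)} {b x y : V} (hKU : K ≤ UF)
    (hKb : ∀ g ∈ K, g b = b) (hKx : ∀ g ∈ K, g x = x)
    (hK : ∀ g ∈ UF, g b = b → (∀ u ∈ branch hT c b (c b x), g u = u) → g ∈ K)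
    (hx : T.Adj b x) (hy : T.Adj b y) :
    (MulAction.orbit K y).ncard =
      (MulAction.orbit (F ⊓ MulAction.stabilizer (Equiv.Perm Ω) (c b x) :
        Subgroup (Equiv.Perm Ω)) (c b y)).ncard := by
  have hadj : ∀ g ∈ K, T.Adj b (g y) := fun g hg => by
    simpa [hKb g hg] using (((hUF g).1 (hKU hg)).1 b y).1 hy
  refine Set.BijOn.ncard_eq (f := c b) ⟨?_, ?_, ?_⟩
  · rintro _ ⟨⟨g, hg⟩, rfl⟩
    have hgaut := ((hUF g).1 (hKU hg)).1
    refine ⟨⟨σ g b, ((hUF g).1 (hKU hg)).2 b, ?_⟩, ?_⟩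
    · show σ g b (c b x) = c b x
      rw [hσ g hgaut b x hx, hKb g hg, hKx g hg]
    · show σ g b (c b y) = c b (g y)
      rw [hσ g hgaut b y hy, hKb g hg]
  · rintro _ ⟨⟨g, hg⟩, rfl⟩ _ ⟨⟨g', hg'⟩, rfl⟩ h
    exact hc.eq_of_colour_eq (hadj g hg) (hadj g' hg') h
  · rintro _ ⟨⟨π, hπF, hπa⟩, rfl⟩
    obtain ⟨g, hgU, hgb, hgB, hgc⟩ := hc.exists_mem_fixing_branch hσ hUF hT b hπF hπa
    exact ⟨g y, ⟨⟨g, hK g hgU hgb hgB⟩, rfl⟩, hgc y hy⟩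

include hc hUF hT hadj hred in
lemma inf_edgeStabilizer_eq :
    UF ⊓ MulAction.stabilizer (Equiv.Perm V) (v m) ⊓
        MulAction.stabilizer (Equiv.Perm V) (v (m + 1)) ⊓
      (UF ⊓ MulAction.stabilizer (Equiv.Perm V) (v 0) ⊓
        MulAction.stabilizer (Equiv.Perm V) (v 1)) =
      UF ⊓ fixingSubgroup (Equiv.Perm V) (v '' Set.Iic (m + 1)) := by
  ext g
  simp only [Subgroup.mem_inf, MulAction.mem_stabilizer_iff, Equiv.Perm.smul_def,
    mem_fixingSubgroup_image_Iic]
  constructor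
  · rintro ⟨⟨⟨hg, -⟩, hm⟩, ⟨-, h0⟩, -⟩
    exact ⟨hg, fun j hj =>
      hc.apply_eq_self_of_ends hadj hred hT ((hUF g).1 hg).1 h0 hm hj⟩
  · rintro ⟨hg, h⟩
    exact ⟨⟨⟨hg, h m (by omega)⟩, h _ le_rfl⟩, ⟨hg, h 0 (by omega)⟩, h 1 (by omega)⟩

include hc hσ hUF hT hadj hred in
lemma relIndex_fixingSubgroup_succ {i : ℕ} (hi : i < m) :
    (UF ⊓ fixingSubgroup (Equiv.Perm V) (v '' Set.Iic (i + 2))).relIndex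
        (UF ⊓ fixingSubgroup (Equiv.Perm V) (v '' Set.Iic (i + 1))) =
      (F ⊓ MulAction.stabilizer (Equiv.Perm Ω) (c (v (i + 1)) (v (i + 2)))).relIndex
        (F ⊓ MulAction.stabilizer (Equiv.Perm Ω) (c (v i) (v (i + 1)))) := by
  rw [Subgroup.relIndex_eq_ncard_orbit (x := v (i + 2)),
    Subgroup.relIndex_eq_ncard_orbit (x := c (v (i + 1)) (v (i + 2))),
    hc.symm _ _ (hadj i (by omega))]
  · refine hc.ncard_orbit_eq hσ hUF hT inf_le_left (fun g hg => ?_) (fun g hg => ?_)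
      (fun g hg hgb hgB => ?_) (hadj i (by omega)).symm (hadj (i + 1) (by omega))
    · exact mem_fixingSubgroup_image_Iic.1 (Subgroup.mem_inf.1 hg).2 _ le_rfl
    · exact mem_fixingSubgroup_image_Iic.1 (Subgroup.mem_inf.1 hg).2 _ (by omega)
    · refine Subgroup.mem_inf.2 ⟨hg, mem_fixingSubgroup_image_Iic.2 fun j hj => ?_⟩
      rcases Nat.lt_or_eq_of_le hj with hj | rfl
      · exact hgB _ (hc.mem_branch_of_le hadj hred hT (by omega) (Nat.le_of_lt_succ hj))
      · exact hgb
  · intro π hπ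
    simp [Subgroup.mem_inf, (Subgroup.mem_inf.1 hπ).1]
  · intro g hg
    rw [Subgroup.mem_inf, mem_fixingSubgroup_image_Iic] at hg ⊢
    refine ⟨fun h => h.2 _ le_rfl, fun h => ⟨hg.1, fun j hj => ?_⟩⟩
    rcases Nat.lt_or_eq_of_le hj with hj | rfl
    · exact hg.2 j (by omega)
    · exact h

end IsLegalColouring

end UniversalGroup

end BurgerMozes

theorem stabilizer_index_along_path_general {V Ω : Type*}
    (T : SimpleGraph V) (hT : T.IsTree) (c : V → V → Ω)
    (hsym : ∀ u v : V, T.Adj u v → c u v = c v u)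
    (hbij : ∀ v : V, Set.BijOn (fun u => c v u) (T.neighborSet v) Set.univ)
    (σ : Equiv.Perm V → V → Equiv.Perm Ω)
    (hσ : ∀ g : Equiv.Perm V, (∀ u w : V, T.Adj u w ↔ T.Adj (g u) (g w)) →
      ∀ v u : V, T.Adj v u → σ g v (c v u) = c (g v) (g u))
    (F : Subgroup (Equiv.Perm Ω))
    (UF : Subgroup (Equiv.Perm V))
    (hUF : ∀ g : Equiv.Perm V, g ∈ UF ↔
      ((∀ u w : V, T.Adj u w ↔ T.Adj (g u) (g w)) ∧ ∀ v : V, σ g v ∈ F))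
    (k : ℕ) (v : ℕ → V)
    (hadj : ∀ i ≤ k, T.Adj (v i) (v (i + 1)))
    (hred : ∀ i : ℕ, i + 2 ≤ k + 1 → v i ≠ v (i + 2)) :
    ((UF ⊓ MulAction.stabilizer (Equiv.Perm V) (v k) ⊓
        MulAction.stabilizer (Equiv.Perm V) (v (k + 1))).relIndex
      (UF ⊓ MulAction.stabilizer (Equiv.Perm V) (v 0) ⊓
        MulAction.stabilizer (Equiv.Perm V) (v 1))) =
    ∏ i ∈ Finset.range k,
      ((F ⊓ MulAction.stabilizer (Equiv.Perm Ω) (c (v (i + 1)) (v (i + 2)))).relIndex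
        (F ⊓ MulAction.stabilizer (Equiv.Perm Ω) (c (v i) (v (i + 1))))) := by
  have hc : BurgerMozes.IsLegalColouring T c := ⟨hsym, hbij⟩
  have hadj' : ∀ j < k + 1, T.Adj (v j) (v (j + 1)) := fun j hj => hadj j (Nat.le_of_lt_succ hj)
  rw [← Subgroup.inf_relIndex_right, hc.inf_edgeStabilizer_eq hUF hT hadj' hred,
    BurgerMozes.inf_stabilizer_stabilizer_eq]
  refine (Subgroup.relIndex_eq_prod_relIndex_succ
    (BurgerMozes.antitone_inf_fixingSubgroup_image_Iic_succ UF v) k).trans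
    (Finset.prod_congr rfl fun i hi => ?_)
  exact hc.relIndex_fixingSubgroup_succ hσ hUF hT hadj' hred (Finset.mem_range.1 hi)

/-- Let `(v 0, v 1, …, v k, v (k+1))` be a (reduced) path in the legally
coloured regular tree `T`, and set `e i = (v i, v (i+1))`.  In the Burger–Mozes group
`U(F)`, writing `U_e` for the pointwise stabilizer of the endpoints of the edge `e` and
`F_a` for the stabilizer of the colour `a` in `F`,
`[U_{e 0} : U_{e 0} ∩ U_{e k}] = ∏_{i=0}^{k-1} |F_{c(e i)} / (F_{c(e i)} ∩ F_{c(e (i+1))})|`. -/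
theorem stabilizer_index_along_path {V Ω : Type*} [Fintype Ω]
    (T : SimpleGraph V) (hT : T.IsTree) (c : V → V → Ω)
    (hsym : ∀ u v : V, T.Adj u v → c u v = c v u)
    (hbij : ∀ v : V, Set.BijOn (fun u => c v u) (T.neighborSet v) Set.univ)
    (σ : Equiv.Perm V → V → Equiv.Perm Ω)
    (hσ : ∀ g : Equiv.Perm V, (∀ u w : V, T.Adj u w ↔ T.Adj (g u) (g w)) →
      ∀ v u : V, T.Adj v u → σ g v (c v u) = c (g v) (g u))
    (F : Subgroup (Equiv.Perm Ω))
    (UF : Subgroup (Equiv.Perm V))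
    (hUF : ∀ g : Equiv.Perm V, g ∈ UF ↔
      ((∀ u w : V, T.Adj u w ↔ T.Adj (g u) (g w)) ∧ ∀ v : V, σ g v ∈ F))
    (k : ℕ) (v : ℕ → V)
    (hadj : ∀ i ≤ k, T.Adj (v i) (v (i + 1)))
    (hred : ∀ i : ℕ, i + 2 ≤ k + 1 → v i ≠ v (i + 2)) :
    ((UF ⊓ MulAction.stabilizer (Equiv.Perm V) (v k) ⊓
        MulAction.stabilizer (Equiv.Perm V) (v (k + 1))).relIndex
      (UF ⊓ MulAction.stabilizer (Equiv.Perm V) (v 0) ⊓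
        MulAction.stabilizer (Equiv.Perm V) (v 1))) =
    ∏ i ∈ Finset.range k,
      ((F ⊓ MulAction.stabilizer (Equiv.Perm Ω) (c (v (i + 1)) (v (i + 2)))).relIndex
        (F ⊓ MulAction.stabilizer (Equiv.Perm Ω) (c (v i) (v (i + 1))))) :=
  stabilizer_index_along_path_general T hT c hsym hbij σ hσ F UF hUF k v hadj hred
end

section
/- Suppose g, h are automorphisms of a locally finite regular tree T with h, g hyperbolic, and let v be a vertex. Set d_n = d(h^{-n}(v), axis(g)). Then the sequence (d_n) is eventually non-decreasing, and it is bounded if and only if ω_-(h) ∈ { ω_+(g), ω_-(g) }. -/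
/-- `p : ℤ → V` is a translation axis for `g` with translation length `l ≥ 1`. -/
def IsTransAxis {V : Type*} (T : SimpleGraph V) (g : Equiv.Perm V) (p : ℤ → V) (l : ℕ) :
    Prop :=
  Function.Injective p ∧ (∀ i : ℤ, T.Adj (p i) (p (i + 1))) ∧ 1 ≤ l ∧
    ∀ i : ℤ, g (p i) = p (i + l)

noncomputable def distToAxis {V : Type*} (T : SimpleGraph V) (p : ℤ → V) (u : V) : ℕ :=
  sInf (Set.range fun i : ℤ => T.dist u (p i))

/-!
Every vertex `u` of a tree has a nearest point `ph (ρ u)` on the axis of `h`, the distance from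
`u` to `ph j` is `d(u, ph (ρ u)) + |j - ρ u|`, and a geodesic between vertices with different
projections runs through the axis. As `h` translates its axis by `lh`, the orbit point `h⁻ⁿ v`
hangs at the constant height `d(v, axis h)` above `ph (ρ v - n lh)`, which runs off to `ω₋(h)`.

If the projection of the axis of `g` onto the axis of `h` is bounded below, then for large `n`
every geodesic from `h⁻ⁿ v` to the axis of `g` climbs to the axis of `h` and follows it up, so
`dₙ` grows by `lh` at each step, while the two axes share only finitely many vertices of the ray
towards `ω₋(h)`. Otherwise the axis of `g` can change its projection only at vertices of the axis
of `h`, so it contains the whole ray towards `ω₋(h)`, and `dₙ = d(v, axis h)` for large `n`.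
-/

open Set

namespace SimpleGraph

variable {V W : Type*} {G : SimpleGraph V} {G' : SimpleGraph W}

lemma Reachable.dist_map_le {u v : V} (h : G.Reachable u v) (f : G →g G') :
    G'.dist (f u) (f v) ≤ G.dist u v := by
  obtain ⟨p, hp⟩ := h.exists_walk_length_eq_dist
  exact hp ▸ p.length_map f ▸ dist_le (p.map f)

lemma Iso.dist_eq (hG : G.Connected) (f : G ≃g G') (u v : V) :
    G'.dist (f u) (f v) = G.dist u v := by
  refine le_antisymm ((hG u v).dist_map_le f.toHom) ?_
  simpa using ((hG u v).map f.toHom).dist_map_le f.symm.toHom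

lemma Connected.exists_adj_dist_add_one (hG : G.Connected) {u w : V} (hne : u ≠ w) :
    ∃ x, G.Adj u x ∧ G.dist x w + 1 = G.dist u w := by
  obtain ⟨p, -, hp⟩ := hG.exists_path_of_dist u w
  have hnil : ¬ p.Nil := Walk.not_nil_of_ne hne
  refine ⟨p.snd, p.adj_snd hnil, le_antisymm ?_ ?_⟩
  · have := dist_le p.tail
    have := p.length_tail_add_one hnil
    omega
  · have := hG.dist_triangle (u := u) (v := p.snd) (w := w)
    rw [dist_eq_one_iff_adj.mpr (p.adj_snd hnil)] at this
    omega

lemma IsTree.eq_of_adj_of_dist_add_one (hG : G.IsTree) {v w x y : V} (hx : G.Adj w x)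
    (hy : G.Adj w y) (hdx : G.dist v x + 1 = G.dist v w) (hdy : G.dist v y + 1 = G.dist v w) :
    x = y := by
  classical
  obtain ⟨P, hP, hPl⟩ := hG.connected.exists_path_of_dist v w
  have hpen : ∀ z, G.Adj w z → G.dist v z + 1 = G.dist v w → z = P.penultimate := by
    intro z hz hdz
    obtain ⟨Q, hQ, hQl⟩ := hG.connected.exists_path_of_dist v z
    have hw : w ∉ Q.support := fun hw => by
      have := (dist_le (Q.takeUntil w hw)).trans (Q.length_takeUntil_le_length hw)
      omega
    exact hG.isAcyclic.eq_penultimate_of_adj_end hP hz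
      (hG.isAcyclic.mem_support_of_ne_mem_support_of_adj_of_isPath hP hQ hz hw)
  rw [hpen x hx hdx, hpen y hy hdy]

end SimpleGraph

theorem Nat.eq_add_of_step_of_no_peak {f : ℕ → ℕ}
    (hstep : ∀ n, f (n + 1) = f n + 1 ∨ f n = f (n + 1) + 1)
    (hpeak : ∀ n, ¬ (f n < f (n + 1) ∧ f (n + 2) < f (n + 1))) (h01 : f 0 ≤ f 1) :
    ∀ n, f n = f 0 + n := by
  have hsucc : ∀ n, f (n + 1) = f n + 1 := by
    intro n
    induction n with
    | zero => have := hstep 0; simp only [zero_add] at *; omega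
    | succ n ih =>
      have := hstep (n + 1)
      have := hpeak n
      rw [show n + 1 + 1 = n + 2 from rfl] at *
      omega
  intro n
  induction n with
  | zero => rfl
  | succ n ih => rw [hsucc, ih, add_assoc]

theorem Int.exists_eq_add_natAbs_of_step_of_no_peak {f : ℤ → ℕ}
    (hstep : ∀ j, f (j + 1) = f j + 1 ∨ f j = f (j + 1) + 1)
    (hpeak : ∀ j, ¬ (f j < f (j + 1) ∧ f (j + 2) < f (j + 1))) :
    ∃ m, ∀ j, f j = f m + (j - m).natAbs := by
  set m := Function.argmin f
  have hmin := Function.argmin_le f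
  have hright := Nat.eq_add_of_step_of_no_peak (f := fun n => f (m + n))
    (fun n => by simpa [add_assoc] using hstep (m + n))
    (fun n => by simpa [add_assoc] using hpeak (m + n)) (by simpa using hmin (m + 1))
  have hleft := Nat.eq_add_of_step_of_no_peak (f := fun n => f (m - n))
    (fun n => by
      have := hstep (m - n - 1)
      simp only [sub_add_cancel] at this
      push_cast; rw [← sub_sub]; omega)
    (fun n => by
      have := hpeak (m - n - 2)
      rw [show m - n - 2 + 1 = m - ((n + 1 : ℕ) : ℤ) by push_cast; ring,
        show m - n - 2 + 2 = m - n by ring,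
        show m - n - 2 = m - ((n + 2 : ℕ) : ℤ) by push_cast; ring] at this
      tauto)
    (by simpa using hmin (m - 1))
  refine ⟨m, fun j => ?_⟩
  obtain ⟨n, rfl | rfl⟩ : ∃ n : ℕ, j = m + n ∨ j = m - n := ⟨(j - m).natAbs, by omega⟩
  · simpa using hright n
  · simpa using hleft n

theorem Nat.eq_and_eq_of_forall_add_natAbs_sub {a b : ℕ} {m m' : ℤ}
    (h : ∀ j : ℤ, a + (j - m).natAbs = b + (j - m').natAbs) : a = b ∧ m = m' := by
  have := h m
  have := h m'
  omega

theorem Int.exists_eq_and_eq_add_one_of_le_of_lt {r : ℤ → ℤ}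
    (hr : ∀ j, (r (j + 1) - r j).natAbs ≤ 1) {a b k : ℤ} (hab : a ≤ b) (ha : r a ≤ k)
    (hb : k < r b) : ∃ j, r j = k ∧ r (j + 1) = k + 1 := by
  induction b, hab using Int.leInduction with
  | base => omega
  | succ n _ ih =>
    by_cases hn : k < r n
    · exact ih hn
    · have := hr n
      exact ⟨n, by omega, by omega⟩

theorem Int.exists_forall_ge_sub_mul_lt (a L : ℤ) {l : ℕ} (hl : 1 ≤ l) :
    ∃ N : ℕ, ∀ n ≥ N, a - n * l < L :=
  ⟨(a - L + 1).toNat, fun n hn => by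
    nlinarith [(by omega : a - L + 1 ≤ n), (by exact_mod_cast hl : (1 : ℤ) ≤ l)]⟩

theorem Set.range_eq_range_natCast_union_range_neg_natCast {α : Type*} (q : ℤ → α) :
    range q = range (fun n : ℕ => q n) ∪ range (fun n : ℕ => q (-n)) := by
  refine Subset.antisymm ?_ (union_subset (range_comp_subset_range _ _)
    (range_comp_subset_range _ _))
  rintro _ ⟨j, rfl⟩
  obtain ⟨n, rfl | rfl⟩ := Int.eq_nat_or_neg j
  exacts [Or.inl ⟨n, rfl⟩, Or.inr ⟨n, rfl⟩]

theorem Nat.not_bddAbove_range_of_lt_succ {f : ℕ → ℕ} {N : ℕ}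
    (h : ∀ n ≥ N, f n < f (n + 1)) : ¬ BddAbove (range f) := fun hf =>
  (strictMono_nat_of_lt_succ fun n => by
    simpa only [Function.comp, add_right_comm] using h (n + N) (by omega)
    ).not_bddAbove_range_of_wellFoundedLT (hf.mono (range_comp_subset_range (· + N) f))

section DistToAxis

variable {V : Type*} {T : SimpleGraph V} {q : ℤ → V}

lemma distToAxis_le (u : V) (j : ℤ) : distToAxis T q u ≤ T.dist u (q j) :=
  Nat.sInf_le ⟨j, rfl⟩

lemma exists_dist_eq_distToAxis (u : V) : ∃ j, T.dist u (q j) = distToAxis T q u :=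
  Nat.sInf_mem (range_nonempty _)

lemma distToAxis_eq_add {x y : V} {c : ℕ} (h : ∀ j, T.dist x (q j) = T.dist y (q j) + c) :
    distToAxis T q x = distToAxis T q y + c := by
  obtain ⟨i, hi⟩ := exists_dist_eq_distToAxis (T := T) (q := q) x
  obtain ⟨j, hj⟩ := exists_dist_eq_distToAxis (T := T) (q := q) y
  have := distToAxis_le (T := T) (q := q) x j
  have := distToAxis_le (T := T) (q := q) y i
  have := h i
  have := h j
  omega

end DistToAxis

def IsProjection {V : Type*} (T : SimpleGraph V) (p : ℤ → V) (ρ : V → ℤ) : Prop :=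
  ∀ u j, T.dist u (p j) = T.dist u (p (ρ u)) + (j - ρ u).natAbs

lemma SimpleGraph.IsTree.exists_isProjection {V : Type*} {T : SimpleGraph V} (hT : T.IsTree)
    {p : ℤ → V} (hinj : p.Injective) (hadj : ∀ i, T.Adj (p i) (p (i + 1))) :
    ∃ ρ, IsProjection T p ρ := by
  have key : ∀ u, ∃ m, ∀ j, T.dist u (p j) = T.dist u (p m) + (j - m).natAbs := by
    intro u
    refine Int.exists_eq_add_natAbs_of_step_of_no_peak
      (fun j => hT.dist_eq_dist_add_one_of_adj u (hadj j) |>.symm) ?_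
    rintro j ⟨h₁, h₂⟩
    have hadj₂ : T.Adj (p (j + 1)) (p (j + 2)) := by simpa [add_assoc] using hadj (j + 1)
    have := hT.dist_eq_dist_add_one_of_adj u (hadj j)
    have := hT.dist_eq_dist_add_one_of_adj u hadj₂
    have := hinj <| hT.eq_of_adj_of_dist_add_one (v := u) (hadj j).symm hadj₂ (by omega)
      (by omega)
    omega
  choose ρ hρ using key
  exact ⟨ρ, hρ⟩

namespace IsProjection

variable {V : Type*} {T : SimpleGraph V} {p q : ℤ → V} {ρ : V → ℤ}

lemma proj_apply (hρ : IsProjection T p ρ) (k : ℤ) : ρ (p k) = k := by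
  have := hρ (p k) k
  rw [SimpleGraph.dist_self] at this
  omega

lemma dist_apply_apply (hρ : IsProjection T p ρ) (i j : ℤ) :
    T.dist (p i) (p j) = (j - i).natAbs := by
  rw [hρ, hρ.proj_apply, SimpleGraph.dist_self, zero_add]

lemma injective (hρ : IsProjection T p ρ) : p.Injective := fun i j hij => by
  have := hρ.dist_apply_apply i j
  rw [hij, SimpleGraph.dist_self] at this
  omega

lemma natAbs_dist_sub_add_natAbs_proj_sub_le_one (hT : T.IsTree) (hρ : IsProjection T p ρ)
    {x y : V} (hxy : T.Adj x y) :
    ((T.dist x (p (ρ x)) : ℤ) - T.dist y (p (ρ y))).natAbs + (ρ x - ρ y).natAbs ≤ 1 := by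
  have step : ∀ z, T.dist x z ≤ T.dist y z + 1 ∧ T.dist y z ≤ T.dist x z + 1 := by
    intro z
    have := hT.dist_eq_dist_add_one_of_adj z hxy
    rw [SimpleGraph.dist_comm (u := z), SimpleGraph.dist_comm (u := z)] at this
    omega
  have := hρ x (min (ρ x) (ρ y))
  have := hρ y (min (ρ x) (ρ y))
  have := hρ x (max (ρ x) (ρ y))
  have := hρ y (max (ρ x) (ρ y))
  have := step (p (min (ρ x) (ρ y)))
  have := step (p (max (ρ x) (ρ y)))
  omega

lemma eq_of_adj_of_proj_ne (hT : T.IsTree) (hρ : IsProjection T p ρ) {x y : V}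
    (hxy : T.Adj x y) (hne : ρ x ≠ ρ y) : x = p (ρ x) := by
  by_contra hx
  -- the neighbour `x'` of `x` towards the line keeps the projection, so it is a second
  -- neighbour of `x` closer to `p (ρ y)` than `x` is
  obtain ⟨x', hxx', hx'⟩ := hT.connected.exists_adj_dist_add_one hx
  have := hρ.natAbs_dist_sub_add_natAbs_proj_sub_le_one hT hxy
  have := hρ.natAbs_dist_sub_add_natAbs_proj_sub_le_one hT hxx'
  have := hρ x' (ρ x)
  have hρx' : ρ x' = ρ x := by omega
  have := hρ x (ρ y)
  have := hρ x' (ρ y)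
  have hx'y : x' = y := by
    refine hT.eq_of_adj_of_dist_add_one (v := p (ρ y)) hxx' hxy ?_ ?_ <;>
      rw [SimpleGraph.dist_comm (u := p (ρ y)), SimpleGraph.dist_comm (u := p (ρ y))] <;> omega
  exact hne (hx'y ▸ hρx').symm

lemma dist_eq_add_dist_of_proj_ne (hT : T.IsTree) (hρ : IsProjection T p ρ) {u w : V}
    (hne : ρ u ≠ ρ w) : T.dist u w = T.dist u (p (ρ u)) + T.dist (p (ρ u)) w := by
  by_cases hu : u = p (ρ u)
  · rw [← hu, SimpleGraph.dist_self, zero_add]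
  obtain ⟨x, hux, hx⟩ :=
    hT.connected.exists_adj_dist_add_one (u := u) (w := w) (by rintro rfl; exact hne rfl)
  have hρx : ρ x = ρ u := by
    by_contra h
    exact hu (hρ.eq_of_adj_of_proj_ne hT hux (Ne.symm h))
  have ih := hρ.dist_eq_add_dist_of_proj_ne hT (hρx ▸ hne : ρ x ≠ ρ w)
  rw [hρx] at ih
  have := hT.dist_eq_dist_add_one_of_adj (p (ρ u)) hux
  have := hT.connected.dist_triangle (u := u) (v := p (ρ u)) (w := w)
  rw [SimpleGraph.dist_comm (u := p (ρ u)) (v := u),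
    SimpleGraph.dist_comm (u := p (ρ u)) (v := x)] at *
  omega
termination_by T.dist u w
decreasing_by omega

lemma proj_pow_apply (hρ : IsProjection T p ρ) {φ : Equiv.Perm V} {l : ℤ}
    (hφ : ∀ x y, T.dist (φ x) (φ y) = T.dist x y) (hφp : ∀ i, φ (p i) = p (i + l)) (u : V)
    (n : ℕ) :
    ρ ((φ ^ n) u) = ρ u + n * l ∧
      T.dist ((φ ^ n) u) (p (ρ ((φ ^ n) u))) = T.dist u (p (ρ u)) := by
  induction n with
  | zero => simp
  | succ n ih =>
    set w := (φ ^ n) u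
    have key : ∀ j, T.dist (φ w) (p (ρ (φ w))) + (j - ρ (φ w)).natAbs =
        T.dist w (p (ρ w)) + (j - (ρ w + l)).natAbs := by
      intro j
      have := hρ w (j - l)
      rw [← hφ w, hφp, sub_add_cancel] at this
      rw [← hρ, this]
      omega
    obtain ⟨hα, hm⟩ := Nat.eq_and_eq_of_forall_add_natAbs_sub key
    rw [pow_succ', Equiv.Perm.mul_apply]
    refine ⟨?_, hα.trans ih.2⟩
    rw [hm, ih.1]
    push_cast
    ring

lemma proj_inv_pow_apply (hT : T.IsTree) (hρ : IsProjection T p ρ) {h : Equiv.Perm V}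
    (hh : ∀ u w, T.Adj u w ↔ T.Adj (h u) (h w)) {l : ℕ} (hhp : ∀ i, h (p i) = p (i + l))
    (u : V) (n : ℕ) :
    ρ ((h⁻¹ ^ n) u) = ρ u - n * l ∧
      T.dist ((h⁻¹ ^ n) u) (p (ρ ((h⁻¹ ^ n) u))) = T.dist u (p (ρ u)) := by
  have hiso : ∀ x y, T.dist (h⁻¹ x) (h⁻¹ y) = T.dist x y := fun x y => by
    simpa using (SimpleGraph.Iso.dist_eq hT.connected (⟨h, (hh _ _).symm⟩ : T ≃g T)
      (h⁻¹ x) (h⁻¹ y)).symm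
  have := hρ.proj_pow_apply hiso (l := -l)
    (fun i => by rw [Equiv.Perm.inv_eq_iff_eq, hhp, neg_add_cancel_right]) u n
  rwa [mul_neg, ← sub_eq_add_neg] at this

lemma exists_apply_eq_of_le_of_lt (hT : T.IsTree) (hρ : IsProjection T p ρ)
    (hq : ∀ i, T.Adj (q i) (q (i + 1))) {a b k : ℤ} (ha : ρ (q a) ≤ k) (hb : k < ρ (q b)) :
    ∃ j, q j = p k := by
  wlog hab : a ≤ b generalizing q a b
  · have hq' : ∀ i, T.Adj (q (-i)) (q (-(i + 1))) := fun i => by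
      simpa [neg_add_eq_sub, sub_add_cancel] using (hq (-(i + 1))).symm
    obtain ⟨j, hj⟩ := this hq' (a := -a) (b := -b) (by simpa using ha) (by simpa using hb)
      (by omega)
    exact ⟨-j, hj⟩
  obtain ⟨j, hj, hj'⟩ := Int.exists_eq_and_eq_add_one_of_le_of_lt (r := fun i => ρ (q i))
    (fun i => by have := hρ.natAbs_dist_sub_add_natAbs_proj_sub_le_one hT (hq i); omega)
    hab ha hb
  exact ⟨j, hj ▸ hρ.eq_of_adj_of_proj_ne hT (hq j) (by omega)⟩

lemma eq_of_proj_eq (hT : T.IsTree) (hρ : IsProjection T p ρ)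
    (hq : ∀ a b, T.dist (q a) (q b) = (b - a).natAbs) {j j₀ j₂ k : ℤ}
    (h₀ : q j₀ = p (k - 1)) (h₂ : q j₂ = p (k + 1)) (hj : ρ (q j) = k) : q j = p k := by
  have := hq j j₀
  have := hq j j₂
  have := hq j₀ j₂
  rw [h₀, h₂, hρ.dist_apply_apply] at *
  rw [hρ, hj] at *
  have : T.dist (q j) (p k) = 0 := by omega
  rwa [hT.connected.dist_eq_zero_iff] at this

lemma distToAxis_eq_distToAxis_add (hT : T.IsTree) (hρ : IsProjection T p ρ) {u : V}
    (hq : ∀ j, ρ (q j) = ρ u → q j = p (ρ u)) :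
    distToAxis T q u = distToAxis T q (p (ρ u)) + T.dist u (p (ρ u)) := by
  refine distToAxis_eq_add fun j => ?_
  by_cases hj : ρ (q j) = ρ u
  · rw [hq j hj, SimpleGraph.dist_self, zero_add]
  · rw [hρ.dist_eq_add_dist_of_proj_ne hT (Ne.symm hj), add_comm]

lemma distToAxis_eq_of_not_bddBelow (hT : T.IsTree) (hρ : IsProjection T p ρ)
    (hqinj : q.Injective) (hqadj : ∀ i, T.Adj (q i) (q (i + 1)))
    (hB : ¬ BddBelow (range fun j => ρ (q j))) {u : V} (hu : ρ u + 1 < ρ (q 0)) :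
    distToAxis T q u = T.dist u (p (ρ u)) := by
  obtain ⟨π, hπ⟩ := hT.exists_isProjection hqinj hqadj
  have hhit : ∀ k < ρ (q 0), ∃ j, q j = p k := fun k hk => by
    obtain ⟨_, ⟨a, rfl⟩, ha⟩ := not_bddBelow_iff.mp hB k
    exact hρ.exists_apply_eq_of_le_of_lt hT hqadj ha.le hk
  obtain ⟨j₀, hj₀⟩ := hhit (ρ u - 1) (by omega)
  obtain ⟨j₁, hj₁⟩ := hhit (ρ u) (by omega)
  obtain ⟨j₂, hj₂⟩ := hhit (ρ u + 1) hu
  rw [hρ.distToAxis_eq_distToAxis_add (q := q) hT fun j hj =>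
    hρ.eq_of_proj_eq hT hπ.dist_apply_apply hj₀ hj₂ hj, ← hj₁]
  have := distToAxis_le (T := T) (q := q) (q j₁) j₁
  rw [SimpleGraph.dist_self] at this
  omega

lemma distToAxis_eq_of_forall_le (hT : T.IsTree) (hρ : IsProjection T p ρ) {t : ℤ}
    (ht : ∀ j, t ≤ ρ (q j)) {u : V} (hu : ρ u < t) :
    distToAxis T q u = distToAxis T q (p t) + (t - ρ u).toNat + T.dist u (p (ρ u)) := by
  rw [hρ.distToAxis_eq_distToAxis_add (q := q) hT fun j hj => by have := ht j; omega]
  congr 1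
  refine distToAxis_eq_add fun j => ?_
  have := hρ (q j) (ρ u)
  have := hρ (q j) t
  have := ht j
  rw [SimpleGraph.dist_comm, SimpleGraph.dist_comm (u := p t)]
  omega

lemma distToAxis_lt_of_forall_le (hT : T.IsTree) (hρ : IsProjection T p ρ) {t : ℤ}
    (ht : ∀ j, t ≤ ρ (q j)) {u u' : V} (hu : ρ u < t) (hu' : ρ u' < ρ u)
    (hα : T.dist u (p (ρ u)) = T.dist u' (p (ρ u'))) :
    distToAxis T q u < distToAxis T q u' := by
  rw [hρ.distToAxis_eq_of_forall_le hT ht hu, hρ.distToAxis_eq_of_forall_le hT ht (hu'.trans hu),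
    hα]
  omega

lemma infinite_inter_of_not_bddBelow (hT : T.IsTree) (hρ : IsProjection T p ρ)
    (hqadj : ∀ i, T.Adj (q i) (q (i + 1))) (hB : ¬ BddBelow (range fun j => ρ (q j))) :
    (range (fun n : ℕ => p (-n)) ∩ range q).Infinite := by
  refine ((Iio_infinite (min (ρ (q 0)) 0)).image hρ.injective.injOn).mono ?_
  rintro _ ⟨k, hk, rfl⟩
  rw [mem_Iio, lt_min_iff] at hk
  obtain ⟨_, ⟨a, rfl⟩, ha⟩ := not_bddBelow_iff.mp hB k
  exact ⟨⟨(-k).toNat, by simp only; congr 1; omega⟩,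
    hρ.exists_apply_eq_of_le_of_lt hT hqadj ha.le hk.1⟩

lemma finite_inter_of_forall_le (hρ : IsProjection T p ρ) {t : ℤ} (ht : ∀ j, t ≤ ρ (q j)) :
    (range (fun n : ℕ => p (-n)) ∩ range q).Finite := by
  refine ((finite_Icc t 0).image p).subset ?_
  rintro _ ⟨⟨n, rfl⟩, ⟨j, hj⟩⟩
  have := ht j
  rw [hj, hρ.proj_apply] at this
  exact ⟨-n, ⟨this, by omega⟩, rfl⟩

end IsProjection

/-- Let `g, h` be hyperbolic automorphisms of a locally finite regular
tree `T`, with axes `pg, ph`, and let `v` be a vertex.  Set `dₙ = d(h⁻ⁿ(v), axis(g))`.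
Then `(dₙ)` is eventually non-decreasing, and it is bounded if and only if
`ω₋(h) ∈ {ω₊(g), ω₋(g)}` (the backward ray of `h` meets the forward or the backward ray
of `g` in infinitely many vertices). -/
theorem dist_to_axis_seq {V : Type*} (T : SimpleGraph V) (hT : T.IsTree)
    [∀ v : V, Fintype (T.neighborSet v)]
    (d : ℕ) (hd : 2 ≤ d) (hreg : ∀ v : V, T.degree v = d)
    (g h : Equiv.Perm V)
    (hg : ∀ u w : V, T.Adj u w ↔ T.Adj (g u) (g w))
    (hh : ∀ u w : V, T.Adj u w ↔ T.Adj (h u) (h w))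
    (pg ph : ℤ → V) (lg lh : ℕ)
    (hpg : IsTransAxis T g pg lg) (hph : IsTransAxis T h ph lh)
    (v : V) :
    (∃ N : ℕ, ∀ n : ℕ, N ≤ n →
        distToAxis T pg ((h⁻¹ ^ n) v) ≤ distToAxis T pg ((h⁻¹ ^ (n + 1)) v)) ∧
    (BddAbove (Set.range fun n : ℕ => distToAxis T pg ((h⁻¹ ^ n) v)) ↔
      ((Set.range fun n : ℕ => ph (-(n : ℤ))) ∩
          Set.range fun n : ℕ => pg (n : ℤ)).Infinite ∨
      ((Set.range fun n : ℕ => ph (-(n : ℤ))) ∩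
          Set.range fun n : ℕ => pg (-(n : ℤ))).Infinite) := by
  obtain ⟨hginj, hgadj, -, -⟩ := hpg
  obtain ⟨hhinj, hhadj, hlh, hhax⟩ := hph
  obtain ⟨ρ, hρ⟩ := hT.exists_isProjection hhinj hhadj
  have horbit := hρ.proj_inv_pow_apply hT hh hhax v
  have hfar : ∀ L, ∃ N, ∀ n ≥ N, ρ ((h⁻¹ ^ n) v) < L := fun L => by
    simpa only [(horbit _).1] using Int.exists_forall_ge_sub_mul_lt (ρ v) L hlh
  rw [← infinite_union, ← inter_union_distrib_left,
    ← range_eq_range_natCast_union_range_neg_natCast]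
  by_cases hB : BddBelow (range fun j => ρ (pg j))
  · obtain ⟨t, ht⟩ := hB
    replace ht : ∀ j, t ≤ ρ (pg j) := fun j => ht ⟨j, rfl⟩
    obtain ⟨N, hN⟩ := hfar t
    have hlt : ∀ n ≥ N,
        distToAxis T pg ((h⁻¹ ^ n) v) < distToAxis T pg ((h⁻¹ ^ (n + 1)) v) :=
      fun n hn => hρ.distToAxis_lt_of_forall_le hT ht (hN n hn)
      (by rw [(horbit _).1, (horbit _).1]; push_cast; nlinarith [hlh])
      ((horbit _).2.trans (horbit _).2.symm)
    exact ⟨⟨N, fun n hn => (hlt n hn).le⟩,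
      iff_of_false (Nat.not_bddAbove_range_of_lt_succ hlt)
        (hρ.finite_inter_of_forall_le ht).not_infinite⟩
  · obtain ⟨N, hN⟩ := hfar (ρ (pg 0) - 1)
    have hconst : ∀ n ≥ N, distToAxis T pg ((h⁻¹ ^ n) v) = T.dist v (ph (ρ v)) :=
      fun n hn => (hρ.distToAxis_eq_of_not_bddBelow hT hginj hgadj hB
        (by have := hN n hn; omega)).trans (horbit n).2
    refine ⟨⟨N, fun n hn => ((hconst n hn).trans (hconst (n + 1) (by omega)).symm).le⟩,
      iff_of_true ?_ (hρ.infinite_inter_of_not_bddBelow hT hgadj hB)⟩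
    exact (Filter.isBoundedUnder_of_eventually_le
      (Filter.eventually_atTop.2 ⟨N, fun n hn => (hconst n hn).le⟩)).bddAbove_range
end
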